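/- arXiv:2010.00335 — 10 statements merged into one kernel-verified Lean document; each statement's English description precedes it below -/
import Mathlib

section
/- Let (L,A,·,ℓ) be a left-symmetric Rinehart algebra. Then (L,A,[·,·],ℓ) with [x,y] = x·y − y·x is a Lie-Rinehart algebra; in particular [x,ay] = a[x,y] + ℓ(x)(a)·y for all a ∈ A and x,y ∈ L, and ℓ([x,y]) = ℓ(x)∘ℓ(y) − ℓ(y)∘ℓ(x). -/
/-!
The Jacobiator of the commutator `[x,y] = x·y - y·x` is the sum over cyclic permutations of
`(x,y,z) - (y,x,z)`, where `(x,y,z) = (x·y)·z - x·(y·z)` is the associator; left-symmetry says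
exactly that each of these differences vanishes.
-/

section

variable {R L : Type*} [CommSemiring R] [AddCommGroup L] [Module R L]

def IsLeftSymmetric (m : L →ₗ[R] L →ₗ[R] L) : Prop :=
  ∀ x y z : L, m (m x y) z - m x (m y z) = m (m y x) z - m y (m x z)

theorem IsLeftSymmetric.jacobi_commutator {m : L →ₗ[R] L →ₗ[R] L} (h : IsLeftSymmetric m)
    (x y z : L) :
    (m (m x y - m y x) z - m z (m x y - m y x)) +
      (m (m y z - m z y) x - m x (m y z - m z y)) +
      (m (m z x - m x z) y - m y (m z x - m x z)) = 0 := by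
  simp only [map_sub, LinearMap.sub_apply]
  linear_combination (norm := abel) h x y z + h y z x + h z x y

theorem commutator_smul_right {A : Type*} [CommRing A] [Module A L]
    (m : L →ₗ[R] L →ₗ[R] L) (ℓ : L → A → A) {x y : L} {a : A}
    (hc1 : m x (a • y) = ℓ x a • y + a • m x y) (hc2 : m (a • y) x = a • m y x) :
    m x (a • y) - m (a • y) x = a • (m x y - m y x) + ℓ x a • y := by
  rw [hc1, hc2, smul_sub]
  abel

end

theorem leftSymmetricRinehart_subadjacent_lieRinehart_general
    {K A L : Type*} [Field K] [CommRing A] [Algebra K A]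
    [AddCommGroup L] [Module K L] [Module A L]
    (m : L →ₗ[K] L →ₗ[K] L) (ℓ : L →ₗ[K] A →ₗ[K] A)
    -- (L, m) is left-symmetric
    (hls : ∀ x y z : L, m (m x y) z - m x (m y z) = m (m y x) z - m y (m x z))
    -- ℓ is a left representation of (L, m) on A
    (hrep : ∀ (x y : L) (a : A), ℓ (m x y - m y x) a = ℓ x (ℓ y a) - ℓ y (ℓ x a))
    -- ℓ (a • x) = a ℓ x
    (hlA : ∀ (a : A) (x : L) (b : A), ℓ (a • x) b = a * ℓ x b)
    -- compatibility conditions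
    (hc1 : ∀ (x : L) (a : A) (y : L), m x (a • y) = ℓ x a • y + a • m x y)
    (hc2 : ∀ (a : A) (x y : L), m (a • x) y = a • m x y) :
    -- (L, [·,·]) is a Lie algebra
    (∀ x y : L, m x y - m y x = -(m y x - m x y)) ∧
    (∀ x y z : L,
      (m (m x y - m y x) z - m z (m x y - m y x)) +
      (m (m y z - m z y) x - m x (m y z - m z y)) +
      (m (m z x - m x z) y - m y (m z x - m x z)) = 0) ∧
    -- [x, a•y] = a•[x,y] + (ℓ x a)•y
    (∀ (x : L) (a : A) (y : L),
      m x (a • y) - m (a • y) x = a • (m x y - m y x) + ℓ x a • y) ∧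
    -- ℓ (a•x) = a ℓ x  (the anchor is A-linear)
    (∀ (a : A) (x : L) (b : A), ℓ (a • x) b = a * ℓ x b) ∧
    -- ℓ is a representation of the Lie algebra (L,[·,·]) on A
    (∀ (x y : L) (a : A), ℓ (m x y - m y x) a = ℓ x (ℓ y a) - ℓ y (ℓ x a)) :=
  ⟨fun _ _ => (neg_sub _ _).symm, IsLeftSymmetric.jacobi_commutator hls,
    fun _ _ _ => commutator_smul_right m (fun x => ℓ x) (hc1 _ _ _) (hc2 _ _ _), hlA, hrep⟩

/-- The sub-adjacent structure of a left-symmetric Rinehart algebra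
`(L, A, m, ℓ)` with bracket `[x,y] = m x y - m y x` is a Lie-Rinehart algebra;
in particular `[x, a•y] = a•[x,y] + (ℓ x a)•y` and `ℓ [x,y] = ℓ x ∘ ℓ y - ℓ y ∘ ℓ x`. -/
theorem leftSymmetricRinehart_subadjacent_lieRinehart
    {K A L : Type*} [Field K] [CharZero K] [CommRing A] [Algebra K A]
    [AddCommGroup L] [Module K L] [Module A L] [IsScalarTower K A L]
    (m : L →ₗ[K] L →ₗ[K] L) (ℓ : L →ₗ[K] A →ₗ[K] A)
    -- (L, m) is left-symmetric
    (hls : ∀ x y z : L, m (m x y) z - m x (m y z) = m (m y x) z - m y (m x z))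
    -- ℓ takes values in derivations of A
    (hder : ∀ (x : L) (a b : A), ℓ x (a * b) = a * ℓ x b + ℓ x a * b)
    -- ℓ is a left representation of (L, m) on A
    (hrep : ∀ (x y : L) (a : A), ℓ (m x y - m y x) a = ℓ x (ℓ y a) - ℓ y (ℓ x a))
    -- ℓ (a • x) = a ℓ x
    (hlA : ∀ (a : A) (x : L) (b : A), ℓ (a • x) b = a * ℓ x b)
    -- compatibility conditions
    (hc1 : ∀ (x : L) (a : A) (y : L), m x (a • y) = ℓ x a • y + a • m x y)
    (hc2 : ∀ (a : A) (x y : L), m (a • x) y = a • m x y) :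
    -- (L, [·,·]) is a Lie algebra
    (∀ x y : L, m x y - m y x = -(m y x - m x y)) ∧
    (∀ x y z : L,
      (m (m x y - m y x) z - m z (m x y - m y x)) +
      (m (m y z - m z y) x - m x (m y z - m z y)) +
      (m (m z x - m x z) y - m y (m z x - m x z)) = 0) ∧
    -- [x, a•y] = a•[x,y] + (ℓ x a)•y
    (∀ (x : L) (a : A) (y : L),
      m x (a • y) - m (a • y) x = a • (m x y - m y x) + ℓ x a • y) ∧
    -- ℓ (a•x) = a ℓ x  (the anchor is A-linear)
    (∀ (a : A) (x : L) (b : A), ℓ (a • x) b = a * ℓ x b) ∧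
    -- ℓ is a representation of the Lie algebra (L,[·,·]) on A
    (∀ (x y : L) (a : A), ℓ (m x y - m y x) a = ℓ x (ℓ y a) - ℓ y (ℓ x a)) :=
  leftSymmetricRinehart_subadjacent_lieRinehart_general m ℓ hls hrep hlA hc1 hc2
end

section
/- Let (L,A,·,ℓ) be a left-symmetric Rinehart algebra. Define on L⊕A the product (x₁+a₁)·'(x₂+a₂) = x₁·x₂ + ℓ(x₁)(a₂) and the anchor ℓ'(x₁+a₁) = ℓ(x₁). Then (L⊕A, A, ·', ℓ') is a left-symmetric Rinehart algebra, with A-module structure b(x+a) = bx+ba. -/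
/-! Both product and anchor act on `L × A` componentwise: the `L`-component of every axiom is
the corresponding axiom of `L`, and the `A`-component is an axiom of the anchor: left-symmetry
becomes the representation property, and the compatibility `q ·' (a r) = ℓ'(q)(a) r + a (q ·' r)`
becomes the Leibniz rule. -/

namespace LeftSymmetricRinehart

variable {K A L : Type*} [CommRing K] [CommRing A] [Algebra K A] [AddCommGroup L] [Module K L]
  (m : L →ₗ[K] L →ₗ[K] L) (ℓ : L →ₗ[K] A →ₗ[K] A)

def prodMul (q r : L × A) : L × A := (m q.1 r.1, ℓ q.1 r.2)

@[simp]
lemma prodMul_snd (q r : L × A) : (prodMul m ℓ q r).2 = ℓ q.1 r.2 := rfl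

lemma anchor_associator_comm
    (hrep : ∀ (x y : L) (a : A), ℓ (m x y - m y x) a = ℓ x (ℓ y a) - ℓ y (ℓ x a))
    (x y : L) (a : A) :
    ℓ (m x y) a - ℓ x (ℓ y a) = ℓ (m y x) a - ℓ y (ℓ x a) := by
  have h := hrep x y a
  simp only [map_sub, LinearMap.sub_apply] at h
  linear_combination h

lemma prodMul_leftSymmetric
    (hls : ∀ x y z : L, m (m x y) z - m x (m y z) = m (m y x) z - m y (m x z))
    (hrep : ∀ (x y : L) (a : A), ℓ (m x y - m y x) a = ℓ x (ℓ y a) - ℓ y (ℓ x a))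
    (q r s : L × A) :
    prodMul m ℓ (prodMul m ℓ q r) s - prodMul m ℓ q (prodMul m ℓ r s) =
      prodMul m ℓ (prodMul m ℓ r q) s - prodMul m ℓ r (prodMul m ℓ q s) :=
  Prod.ext (hls q.1 r.1 s.1) (anchor_associator_comm m ℓ hrep q.1 r.1 s.2)

variable [Module A L]

lemma prodMul_smul_right
    (hder : ∀ (x : L) (a b : A), ℓ x (a * b) = a * ℓ x b + ℓ x a * b)
    (hc1 : ∀ (x : L) (a : A) (y : L), m x (a • y) = ℓ x a • y + a • m x y)
    (q : L × A) (a : A) (r : L × A) :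
    prodMul m ℓ q (a • r) = ℓ q.1 a • r + a • prodMul m ℓ q r := by
  refine Prod.ext (hc1 q.1 a r.1) ?_
  simp only [prodMul_snd, Prod.smul_snd, Prod.snd_add, smul_eq_mul, hder, add_comm]

lemma prodMul_smul_left
    (hlA : ∀ (a : A) (x : L) (b : A), ℓ (a • x) b = a * ℓ x b)
    (hc2 : ∀ (a : A) (x y : L), m (a • x) y = a • m x y)
    (a : A) (q r : L × A) :
    prodMul m ℓ (a • q) r = a • prodMul m ℓ q r :=
  Prod.ext (hc2 a q.1 r.1) (hlA a q.1 r.2)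

end LeftSymmetricRinehart

theorem leftSymmetricRinehart_directSum_general
    {K A L : Type*} [Field K] [CommRing A] [Algebra K A]
    [AddCommGroup L] [Module K L] [Module A L]
    (m : L →ₗ[K] L →ₗ[K] L) (ℓ : L →ₗ[K] A →ₗ[K] A)
    (hls : ∀ x y z : L, m (m x y) z - m x (m y z) = m (m y x) z - m y (m x z))
    (hder : ∀ (x : L) (a b : A), ℓ x (a * b) = a * ℓ x b + ℓ x a * b)
    (hrep : ∀ (x y : L) (a : A), ℓ (m x y - m y x) a = ℓ x (ℓ y a) - ℓ y (ℓ x a))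
    (hlA : ∀ (a : A) (x : L) (b : A), ℓ (a • x) b = a * ℓ x b)
    (hc1 : ∀ (x : L) (a : A) (y : L), m x (a • y) = ℓ x a • y + a • m x y)
    (hc2 : ∀ (a : A) (x y : L), m (a • x) y = a • m x y) :
    let p : L × A → L × A → L × A := fun q r => (m q.1 r.1, ℓ q.1 r.2)
    -- the product ·' is left-symmetric
    ((∀ q r s : L × A, p (p q r) s - p q (p r s) = p (p r q) s - p r (p q s)) ∧
    -- ℓ' takes values in derivations of A
    (∀ (q : L × A) (a b : A), ℓ q.1 (a * b) = a * ℓ q.1 b + ℓ q.1 a * b) ∧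
    -- ℓ' is a left representation of (L ⊕ A, ·') on A
    (∀ (q r : L × A) (a : A),
      ℓ (p q r - p r q).1 a = ℓ q.1 (ℓ r.1 a) - ℓ r.1 (ℓ q.1 a)) ∧
    -- ℓ'(b • q) = b ℓ'(q)
    (∀ (b : A) (q : L × A) (a : A), ℓ (b • q).1 a = b * ℓ q.1 a) ∧
    -- compatibility conditions
    (∀ (q : L × A) (a : A) (r : L × A), p q (a • r) = ℓ q.1 a • r + a • p q r) ∧
    (∀ (a : A) (q r : L × A), p (a • q) r = a • p q r)) :=
  ⟨LeftSymmetricRinehart.prodMul_leftSymmetric m ℓ hls hrep,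
    fun q => hder q.1,
    fun q r => hrep q.1 r.1,
    fun b q => hlA b q.1,
    LeftSymmetricRinehart.prodMul_smul_right m ℓ hder hc1,
    LeftSymmetricRinehart.prodMul_smul_left m ℓ hlA hc2⟩

/-- For a left-symmetric Rinehart algebra `(L, A, m, ℓ)`, the direct
sum `L ⊕ A` with product `(x₁+a₁)·'(x₂+a₂) = x₁·x₂ + ℓ(x₁)(a₂)` and anchor
`ℓ'(x₁+a₁) = ℓ(x₁)` is again a left-symmetric Rinehart algebra over `A`, with
`A`-module structure `b(x+a) = bx + ba`. -/
theorem leftSymmetricRinehart_directSum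
    {K A L : Type*} [Field K] [CharZero K] [CommRing A] [Algebra K A]
    [AddCommGroup L] [Module K L] [Module A L] [IsScalarTower K A L]
    (m : L →ₗ[K] L →ₗ[K] L) (ℓ : L →ₗ[K] A →ₗ[K] A)
    (hls : ∀ x y z : L, m (m x y) z - m x (m y z) = m (m y x) z - m y (m x z))
    (hder : ∀ (x : L) (a b : A), ℓ x (a * b) = a * ℓ x b + ℓ x a * b)
    (hrep : ∀ (x y : L) (a : A), ℓ (m x y - m y x) a = ℓ x (ℓ y a) - ℓ y (ℓ x a))
    (hlA : ∀ (a : A) (x : L) (b : A), ℓ (a • x) b = a * ℓ x b)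
    (hc1 : ∀ (x : L) (a : A) (y : L), m x (a • y) = ℓ x a • y + a • m x y)
    (hc2 : ∀ (a : A) (x y : L), m (a • x) y = a • m x y) :
    let p : L × A → L × A → L × A := fun q r => (m q.1 r.1, ℓ q.1 r.2)
    -- the product ·' is left-symmetric
    ((∀ q r s : L × A, p (p q r) s - p q (p r s) = p (p r q) s - p r (p q s)) ∧
    -- ℓ' takes values in derivations of A
    (∀ (q : L × A) (a b : A), ℓ q.1 (a * b) = a * ℓ q.1 b + ℓ q.1 a * b) ∧
    -- ℓ' is a left representation of (L ⊕ A, ·') on A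
    (∀ (q r : L × A) (a : A),
      ℓ (p q r - p r q).1 a = ℓ q.1 (ℓ r.1 a) - ℓ r.1 (ℓ q.1 a)) ∧
    -- ℓ'(b • q) = b ℓ'(q)
    (∀ (b : A) (q : L × A) (a : A), ℓ (b • q).1 a = b * ℓ q.1 a) ∧
    -- compatibility conditions
    (∀ (q : L × A) (a : A) (r : L × A), p q (a • r) = ℓ q.1 a • r + a • p q r) ∧
    (∀ (a : A) (q r : L × A), p (a • q) r = a • p q r)) :=
  leftSymmetricRinehart_directSum_general m ℓ hls hder hrep hlA hc1 hc2
end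

section
/- Let (L,A,[·,·],ρ) be a Lie-Rinehart algebra, θ a representation on an A-module M, and T: M → L an O-operator, i.e. T(au) = aT(u) and [T(u),T(v)] = T(θ(T(u))(v) − θ(T(v))(u)). Define u ·_T v := θ(T(u))(v). Then (M, A, ·_T, ℓ∘T) is a left-symmetric Rinehart algebra (where ℓ is the anchor of L), and T is a homomorphism from the sub-adjacent Lie algebra of (M,·_T) to (L,[·,·]). -/
/-!
Pulling a representation `σ` of `(L, [·,·])` back along an O-operator `T` gives a representation
of the sub-adjacent bracket `[u, v]_T = u ·_T v - v ·_T u`, because `T [u, v]_T = [T u, T v]`.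
Applied to the anchor this makes `ρ ∘ T` a left representation; applied to `θ` itself it is
exactly the left-symmetry of `·_T`. The remaining axioms follow from the `A`-linearity of `T`
and the module axioms of `θ`.
-/

section OOperator

variable {R L M : Type*} [CommRing R] [AddCommGroup L] [Module R L] [AddCommGroup M] [Module R M]

def IsLieRepresentation {V : Type*} [AddCommGroup V] [Module R V]
    (br : L →ₗ[R] L →ₗ[R] L) (σ : L →ₗ[R] V →ₗ[R] V) : Prop :=
  ∀ (x y : L) (v : V), σ (br x y) v = σ x (σ y v) - σ y (σ x v)

def IsOOperator (br : L →ₗ[R] L →ₗ[R] L) (θ : L →ₗ[R] M →ₗ[R] M) (T : M →ₗ[R] L) : Prop :=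
  ∀ u v : M, br (T u) (T v) = T (θ (T u) v - θ (T v) u)

variable {br : L →ₗ[R] L →ₗ[R] L} {θ : L →ₗ[R] M →ₗ[R] M} {T : M →ₗ[R] L}

theorem IsOOperator.map_subadjacent_bracket (hT : IsOOperator br θ T) (u v : M) :
    T (θ (T u) v - θ (T v) u) = br (T u) (T v) :=
  (hT u v).symm

theorem IsLieRepresentation.comp_oOperator {V : Type*} [AddCommGroup V] [Module R V]
    {σ : L →ₗ[R] V →ₗ[R] V} (hσ : IsLieRepresentation br σ) (hT : IsOOperator br θ T)
    (u v : M) (w : V) :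
    σ (T (θ (T u) v - θ (T v) u)) w = σ (T u) (σ (T v) w) - σ (T v) (σ (T u) w) := by
  rw [hT.map_subadjacent_bracket, hσ]

theorem IsOOperator.leftSymmetric (hθ : IsLieRepresentation br θ) (hT : IsOOperator br θ T)
    (u v w : M) :
    θ (T (θ (T u) v)) w - θ (T u) (θ (T v) w) = θ (T (θ (T v) u)) w - θ (T v) (θ (T u) w) := by
  have h := hθ.comp_oOperator hT u v w
  rw [map_sub, map_sub, LinearMap.sub_apply] at h
  linear_combination (norm := module) h

end OOperator

theorem oOperator_gives_leftSymmetricRinehart_general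
    {K A L M : Type*} [Field K] [CommRing A] [Algebra K A]
    [AddCommGroup L] [Module K L] [Module A L] [IsScalarTower K A L]
    [AddCommGroup M] [Module K M] [Module A M] [IsScalarTower K A M]
    (br : L →ₗ[K] L →ₗ[K] L) (ρ : L →ₗ[K] A →ₗ[K] A)
    (θ : L →ₗ[K] M →ₗ[K] M) (T : M →ₗ[K] L)
    -- Lie-Rinehart axioms for (L, A, br, ρ)
    (hρrep : ∀ (x y : L) (a : A), ρ (br x y) a = ρ x (ρ y a) - ρ y (ρ x a))
    (hρA : ∀ (a : A) (x : L) (b : A), ρ (a • x) b = a * ρ x b)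
    -- θ is a representation of L on the A-module M
    (hθrep : ∀ (x y : L) (v : M), θ (br x y) v = θ x (θ y v) - θ y (θ x v))
    (hθ1 : ∀ (a : A) (x : L) (v : M), θ (a • x) v = a • θ x v)
    (hθ2 : ∀ (x : L) (a : A) (v : M), θ x (a • v) = a • θ x v + ρ x a • v)
    -- T is an O-operator
    (hTA : ∀ (a : A) (u : M), T (a • u) = a • T u)
    (hTO : ∀ u v : M, br (T u) (T v) = T (θ (T u) v - θ (T v) u)) :
    let p : M → M → M := fun u v => θ (T u) v
    -- (M, ·_T) is left-symmetric
    ((∀ u v w : M, p (p u v) w - p u (p v w) = p (p v u) w - p v (p u w)) ∧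
    -- the anchor ℓ_T = ρ ∘ T satisfies ℓ_T (a•u) = a ℓ_T u
    (∀ (a : A) (u : M) (b : A), ρ (T (a • u)) b = a * ρ (T u) b) ∧
    -- compatibility conditions
    (∀ (a : A) (u v : M), p (a • u) v = a • p u v) ∧
    (∀ (u : M) (a : A) (v : M), p u (a • v) = a • p u v + ρ (T u) a • v) ∧
    -- ℓ_T is a left representation of (M, ·_T) on A
    (∀ (u v : M) (a : A),
      ρ (T (p u v - p v u)) a = ρ (T u) (ρ (T v) a) - ρ (T v) (ρ (T u) a)) ∧
    -- T is a Lie algebra homomorphism from the sub-adjacent Lie algebra of (M, ·_T)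
    (∀ u v : M, T (p u v - p v u) = br (T u) (T v))) := by
  have hT : IsOOperator br θ T := hTO
  refine ⟨hT.leftSymmetric hθrep, fun a u b => ?_, fun a u v => ?_, fun u a v => hθ2 (T u) a v,
    IsLieRepresentation.comp_oOperator hρrep hT, hT.map_subadjacent_bracket⟩
  · rw [hTA, hρA]
  · simp only [hTA, hθ1]

/-- If `T : M → L` is an O-operator on a Lie-Rinehart algebra
`(L, A, br, ρ)` with representation `θ` on the `A`-module `M`, then
`u ·_T v := θ (T u) v` makes `(M, A, ·_T, ρ ∘ T)` a left-symmetric Rinehart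
algebra, and `T` is a homomorphism from the sub-adjacent Lie algebra of
`(M, ·_T)` to `(L, br)`. -/
theorem oOperator_gives_leftSymmetricRinehart
    {K A L M : Type*} [Field K] [CharZero K] [CommRing A] [Algebra K A]
    [AddCommGroup L] [Module K L] [Module A L] [IsScalarTower K A L]
    [AddCommGroup M] [Module K M] [Module A M] [IsScalarTower K A M]
    (br : L →ₗ[K] L →ₗ[K] L) (ρ : L →ₗ[K] A →ₗ[K] A)
    (θ : L →ₗ[K] M →ₗ[K] M) (T : M →ₗ[K] L)
    -- Lie-Rinehart axioms for (L, A, br, ρ)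
    (hanti : ∀ x y : L, br x y = - br y x)
    (hjac : ∀ x y z : L, br (br x y) z + br (br y z) x + br (br z x) y = 0)
    (hρrep : ∀ (x y : L) (a : A), ρ (br x y) a = ρ x (ρ y a) - ρ y (ρ x a))
    (hρA : ∀ (a : A) (x : L) (b : A), ρ (a • x) b = a * ρ x b)
    (hρder : ∀ (x : L) (a b : A), ρ x (a * b) = a * ρ x b + ρ x a * b)
    (hcomp : ∀ (x : L) (a : A) (y : L), br x (a • y) = ρ x a • y + a • br x y)
    -- θ is a representation of L on the A-module M
    (hθrep : ∀ (x y : L) (v : M), θ (br x y) v = θ x (θ y v) - θ y (θ x v))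
    (hθ1 : ∀ (a : A) (x : L) (v : M), θ (a • x) v = a • θ x v)
    (hθ2 : ∀ (x : L) (a : A) (v : M), θ x (a • v) = a • θ x v + ρ x a • v)
    -- T is an O-operator
    (hTA : ∀ (a : A) (u : M), T (a • u) = a • T u)
    (hTO : ∀ u v : M, br (T u) (T v) = T (θ (T u) v - θ (T v) u)) :
    let p : M → M → M := fun u v => θ (T u) v
    -- (M, ·_T) is left-symmetric
    ((∀ u v w : M, p (p u v) w - p u (p v w) = p (p v u) w - p v (p u w)) ∧
    -- the anchor ℓ_T = ρ ∘ T satisfies ℓ_T (a•u) = a ℓ_T u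
    (∀ (a : A) (u : M) (b : A), ρ (T (a • u)) b = a * ρ (T u) b) ∧
    -- compatibility conditions
    (∀ (a : A) (u v : M), p (a • u) v = a • p u v) ∧
    (∀ (u : M) (a : A) (v : M), p u (a • v) = a • p u v + ρ (T u) a • v) ∧
    -- ℓ_T is a left representation of (M, ·_T) on A
    (∀ (u v : M) (a : A),
      ρ (T (p u v - p v u)) a = ρ (T u) (ρ (T v) a) - ρ (T v) (ρ (T u) a)) ∧
    -- T is a Lie algebra homomorphism from the sub-adjacent Lie algebra of (M, ·_T)
    (∀ u v : M, T (p u v - p v u) = br (T u) (T v))) :=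
  oOperator_gives_leftSymmetricRinehart_general br ρ θ T hρrep hρA hθrep hθ1 hθ2 hTA hTO
end

section
/- Let (L,A,[·,·],ρ) be a Lie-Rinehart algebra with representation θ on M, and T: M → L an O-operator. Then the linear map T̃ on L⊕M defined by T̃(x+u) = T(u) (i.e. the matrix ((0,T),(0,0))) is a Nijenhuis operator on the semidirect product Lie-Rinehart algebra L⋉_θ M, where [x+u, y+v] = [x,y] + θ(x)(v) − θ(y)(u); i.e. [T̃z, T̃w] = T̃([T̃z,w] + [z,T̃w] − T̃[z,w]) for all z,w ∈ L⊕M. -/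
theorem oOperator_gives_nijenhuis_semidirect_general
    {K L M : Type*} [Field K]
    [AddCommGroup L] [Module K L]
    [AddCommGroup M] [Module K M]
    (br : L →ₗ[K] L →ₗ[K] L)
    (θ : L →ₗ[K] M →ₗ[K] M) (T : M →ₗ[K] L)
    -- T is an O-operator
    (hTO : ∀ u v : M, br (T u) (T v) = T (θ (T u) v - θ (T v) u)) :
    let Br : L × M → L × M → L × M :=
      fun z w => (br z.1 w.1, θ z.1 w.2 - θ w.1 z.2)
    let Nt : L × M → L × M := fun z => (T z.2, 0)
    ∀ z w : L × M,
      Br (Nt z) (Nt w) = Nt (Br (Nt z) w + Br z (Nt w) - Nt (Br z w)) := by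
  intro Br Nt z w
  -- The `M`-components on the right sum to `θ (T z.2) w.2 - θ (T w.2) z.2`.
  simp only [Br, Nt, Prod.mk_add_mk, Prod.mk_sub_mk, map_zero, sub_zero, zero_sub,
    Prod.mk.injEq, and_true]
  rw [hTO, sub_eq_add_neg]

/-- If `T : M → L` is an O-operator on a Lie-Rinehart algebra
`(L, A, br, ρ)` with representation `θ` on `M`, then `T̃(x+u) = T u` is a
Nijenhuis operator on the semidirect product Lie-Rinehart algebra `L ⋉_θ M`
with bracket `[x+u, y+v] = [x,y] + θ(x)v − θ(y)u`. -/
theorem oOperator_gives_nijenhuis_semidirect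
    {K A L M : Type*} [Field K] [CharZero K] [CommRing A] [Algebra K A]
    [AddCommGroup L] [Module K L] [Module A L] [IsScalarTower K A L]
    [AddCommGroup M] [Module K M] [Module A M] [IsScalarTower K A M]
    (br : L →ₗ[K] L →ₗ[K] L) (ρ : L →ₗ[K] A →ₗ[K] A)
    (θ : L →ₗ[K] M →ₗ[K] M) (T : M →ₗ[K] L)
    -- Lie-Rinehart axioms for (L, A, br, ρ)
    (hanti : ∀ x y : L, br x y = - br y x)
    (hjac : ∀ x y z : L, br (br x y) z + br (br y z) x + br (br z x) y = 0)
    (hρrep : ∀ (x y : L) (a : A), ρ (br x y) a = ρ x (ρ y a) - ρ y (ρ x a))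
    (hρA : ∀ (a : A) (x : L) (b : A), ρ (a • x) b = a * ρ x b)
    (hρder : ∀ (x : L) (a b : A), ρ x (a * b) = a * ρ x b + ρ x a * b)
    (hcomp : ∀ (x : L) (a : A) (y : L), br x (a • y) = ρ x a • y + a • br x y)
    -- θ is a representation of L on the A-module M
    (hθrep : ∀ (x y : L) (v : M), θ (br x y) v = θ x (θ y v) - θ y (θ x v))
    (hθ1 : ∀ (a : A) (x : L) (v : M), θ (a • x) v = a • θ x v)
    (hθ2 : ∀ (x : L) (a : A) (v : M), θ x (a • v) = a • θ x v + ρ x a • v)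
    -- T is an O-operator
    (hTA : ∀ (a : A) (u : M), T (a • u) = a • T u)
    (hTO : ∀ u v : M, br (T u) (T v) = T (θ (T u) v - θ (T v) u)) :
    let Br : L × M → L × M → L × M :=
      fun z w => (br z.1 w.1, θ z.1 w.2 - θ w.1 z.2)
    let Nt : L × M → L × M := fun z => (T z.2, 0)
    ∀ z w : L × M,
      Br (Nt z) (Nt w) = Nt (Br (Nt z) w + Br z (Nt w) - Nt (Br z w)) :=
  oOperator_gives_nijenhuis_semidirect_general br θ T hTO
end

section
/- Let (L,A,·,ℓ) be a left-symmetric Rinehart algebra and (M;ρ,μ) a representation. Then L⊕M with product (x₁+m₁)·'(x₂+m₂) = x₁·x₂ + ρ(x₁)m₂ + μ(x₂)m₁ and anchor ℓ'(x+m) = ℓ(x) is a left-symmetric Rinehart algebra over A (the semidirect product). -/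
/-!
Componentwise, the `L`-part of every axiom is the corresponding axiom of `L`. In the `M`-part
of the left-symmetry identity the `ρ`-terms cancel because `ρ` is a left representation, and
for `q = (x₁, v₁)`, `r = (x₂, v₂)`, `s = (x₃, v₃)` the terms in `v₂` and in `v₁` cancel by the
compatibility of `ρ` and `μ` at `(x₁, x₃)` and at `(x₂, x₃)`.
-/

section Semidirect

variable {K A L M : Type*} [CommRing K] [CommRing A]
  [AddCommGroup L] [Module K L] [AddCommGroup M] [Module K M]

def semidirectMul (m : L →ₗ[K] L →ₗ[K] L) (ρ μ : L →ₗ[K] M →ₗ[K] M) (q r : L × M) : L × M :=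
  (m q.1 r.1, ρ q.1 r.2 + μ r.1 q.2)

variable (m : L →ₗ[K] L →ₗ[K] L) (ρ μ : L →ₗ[K] M →ₗ[K] M)

theorem semidirectMul_leftSymmetric
    (hls : ∀ x y z : L, m (m x y) z - m x (m y z) = m (m y x) z - m y (m x z))
    (hρrep : ∀ (x y : L) (v : M), ρ (m x y - m y x) v = ρ x (ρ y v) - ρ y (ρ x v))
    (hcompat : ∀ (x y : L) (v : M),
      ρ x (μ y v) - μ y (ρ x v) = μ (m x y) v - μ y (μ x v))
    (q r s : L × M) :
    semidirectMul m ρ μ (semidirectMul m ρ μ q r) s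
        - semidirectMul m ρ μ q (semidirectMul m ρ μ r s) =
      semidirectMul m ρ μ (semidirectMul m ρ μ r q) s
        - semidirectMul m ρ μ r (semidirectMul m ρ μ q s) := by
  obtain ⟨x₁, v₁⟩ := q
  obtain ⟨x₂, v₂⟩ := r
  obtain ⟨x₃, v₃⟩ := s
  refine Prod.ext (hls x₁ x₂ x₃) ?_
  have hρ := hρrep x₁ x₂ v₃
  simp only [map_sub, LinearMap.sub_apply] at hρ
  simp only [semidirectMul, Prod.snd_sub, map_add]
  linear_combination (norm := abel) hρ - hcompat x₁ x₃ v₂ + hcompat x₂ x₃ v₁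

variable [Module A L] [Module A M]

theorem semidirectMul_smul_right [Module K A] (ℓ : L →ₗ[K] A →ₗ[K] A)
    (hc1 : ∀ (x : L) (a : A) (y : L), m x (a • y) = ℓ x a • y + a • m x y)
    (hρ2 : ∀ (x : L) (a : A) (v : M), ρ x (a • v) = a • ρ x v + ℓ x a • v)
    (hμ1 : ∀ (a : A) (x : L) (v : M), μ (a • x) v = a • μ x v)
    (q : L × M) (a : A) (r : L × M) :
    semidirectMul m ρ μ q (a • r) = ℓ q.1 a • r + a • semidirectMul m ρ μ q r := by
  refine Prod.ext (hc1 q.1 a r.1) ?_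
  simp only [semidirectMul, Prod.snd_add, Prod.smul_snd, Prod.smul_fst, hρ2, hμ1]
  module

theorem semidirectMul_smul_left
    (hc2 : ∀ (a : A) (x y : L), m (a • x) y = a • m x y)
    (hρ1 : ∀ (a : A) (x : L) (v : M), ρ (a • x) v = a • ρ x v)
    (hμ2 : ∀ (x : L) (a : A) (v : M), μ x (a • v) = a • μ x v)
    (a : A) (q r : L × M) :
    semidirectMul m ρ μ (a • q) r = a • semidirectMul m ρ μ q r := by
  refine Prod.ext (hc2 a q.1 r.1) ?_
  simp only [semidirectMul, Prod.smul_snd, Prod.smul_fst, hρ1, hμ2, smul_add]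

end Semidirect

theorem leftSymmetricRinehart_semidirect_general
    {K A L M : Type*} [Field K] [CommRing A] [Algebra K A]
    [AddCommGroup L] [Module K L] [Module A L]
    [AddCommGroup M] [Module K M] [Module A M]
    (m : L →ₗ[K] L →ₗ[K] L) (ℓ : L →ₗ[K] A →ₗ[K] A)
    (ρ μ : L →ₗ[K] M →ₗ[K] M)
    -- left-symmetric Rinehart axioms for (L, A, m, ℓ)
    (hls : ∀ x y z : L, m (m x y) z - m x (m y z) = m (m y x) z - m y (m x z))
    (hder : ∀ (x : L) (a b : A), ℓ x (a * b) = a * ℓ x b + ℓ x a * b)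
    (hrep : ∀ (x y : L) (a : A), ℓ (m x y - m y x) a = ℓ x (ℓ y a) - ℓ y (ℓ x a))
    (hlA : ∀ (a : A) (x : L) (b : A), ℓ (a • x) b = a * ℓ x b)
    (hc1 : ∀ (x : L) (a : A) (y : L), m x (a • y) = ℓ x a • y + a • m x y)
    (hc2 : ∀ (a : A) (x y : L), m (a • x) y = a • m x y)
    -- (M; ρ, μ) is a representation
    (hρrep : ∀ (x y : L) (v : M), ρ (m x y - m y x) v = ρ x (ρ y v) - ρ y (ρ x v))
    (hρ1 : ∀ (a : A) (x : L) (v : M), ρ (a • x) v = a • ρ x v)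
    (hρ2 : ∀ (x : L) (a : A) (v : M), ρ x (a • v) = a • ρ x v + ℓ x a • v)
    (hμ1 : ∀ (a : A) (x : L) (v : M), μ (a • x) v = a • μ x v)
    (hμ2 : ∀ (x : L) (a : A) (v : M), μ x (a • v) = a • μ x v)
    (hcompat : ∀ (x y : L) (v : M),
      ρ x (μ y v) - μ y (ρ x v) = μ (m x y) v - μ y (μ x v)) :
    let p : L × M → L × M → L × M :=
      fun q r => (m q.1 r.1, ρ q.1 r.2 + μ r.1 q.2)
    -- the product ·' is left-symmetric
    ((∀ q r s : L × M, p (p q r) s - p q (p r s) = p (p r q) s - p r (p q s)) ∧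
    -- ℓ' takes values in derivations of A
    (∀ (q : L × M) (a b : A), ℓ q.1 (a * b) = a * ℓ q.1 b + ℓ q.1 a * b) ∧
    -- ℓ' is a left representation of (L ⊕ M, ·') on A
    (∀ (q r : L × M) (a : A),
      ℓ (p q r - p r q).1 a = ℓ q.1 (ℓ r.1 a) - ℓ r.1 (ℓ q.1 a)) ∧
    -- ℓ'(a • q) = a ℓ'(q)
    (∀ (a : A) (q : L × M) (b : A), ℓ (a • q).1 b = a * ℓ q.1 b) ∧
    -- compatibility conditions
    (∀ (q : L × M) (a : A) (r : L × M), p q (a • r) = ℓ q.1 a • r + a • p q r) ∧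
    (∀ (a : A) (q r : L × M), p (a • q) r = a • p q r)) := by
  intro p
  exact ⟨semidirectMul_leftSymmetric m ρ μ hls hρrep hcompat,
    fun q => hder q.1,
    fun q r a => hrep q.1 r.1 a,
    fun a q => hlA a q.1,
    semidirectMul_smul_right m ρ μ ℓ hc1 hρ2 hμ1,
    semidirectMul_smul_left m ρ μ hc2 hρ1 hμ2⟩

/-- For a left-symmetric Rinehart algebra `(L, A, m, ℓ)` and a
representation `(M; ρ, μ)`, the semidirect product `L ⊕ M` with product
`(x₁+m₁)·'(x₂+m₂) = x₁·x₂ + ρ(x₁)m₂ + μ(x₂)m₁` and anchor `ℓ'(x+m) = ℓ(x)` is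
a left-symmetric Rinehart algebra over `A`. -/
theorem leftSymmetricRinehart_semidirect
    {K A L M : Type*} [Field K] [CharZero K] [CommRing A] [Algebra K A]
    [AddCommGroup L] [Module K L] [Module A L] [IsScalarTower K A L]
    [AddCommGroup M] [Module K M] [Module A M] [IsScalarTower K A M]
    (m : L →ₗ[K] L →ₗ[K] L) (ℓ : L →ₗ[K] A →ₗ[K] A)
    (ρ μ : L →ₗ[K] M →ₗ[K] M)
    -- left-symmetric Rinehart axioms for (L, A, m, ℓ)
    (hls : ∀ x y z : L, m (m x y) z - m x (m y z) = m (m y x) z - m y (m x z))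
    (hder : ∀ (x : L) (a b : A), ℓ x (a * b) = a * ℓ x b + ℓ x a * b)
    (hrep : ∀ (x y : L) (a : A), ℓ (m x y - m y x) a = ℓ x (ℓ y a) - ℓ y (ℓ x a))
    (hlA : ∀ (a : A) (x : L) (b : A), ℓ (a • x) b = a * ℓ x b)
    (hc1 : ∀ (x : L) (a : A) (y : L), m x (a • y) = ℓ x a • y + a • m x y)
    (hc2 : ∀ (a : A) (x y : L), m (a • x) y = a • m x y)
    -- (M; ρ, μ) is a representation
    (hρrep : ∀ (x y : L) (v : M), ρ (m x y - m y x) v = ρ x (ρ y v) - ρ y (ρ x v))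
    (hρ1 : ∀ (a : A) (x : L) (v : M), ρ (a • x) v = a • ρ x v)
    (hρ2 : ∀ (x : L) (a : A) (v : M), ρ x (a • v) = a • ρ x v + ℓ x a • v)
    (hμ1 : ∀ (a : A) (x : L) (v : M), μ (a • x) v = a • μ x v)
    (hμ2 : ∀ (x : L) (a : A) (v : M), μ x (a • v) = a • μ x v)
    (hcompat : ∀ (x y : L) (v : M),
      ρ x (μ y v) - μ y (ρ x v) = μ (m x y) v - μ y (μ x v)) :
    let p : L × M → L × M → L × M :=
      fun q r => (m q.1 r.1, ρ q.1 r.2 + μ r.1 q.2)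
    -- the product ·' is left-symmetric
    ((∀ q r s : L × M, p (p q r) s - p q (p r s) = p (p r q) s - p r (p q s)) ∧
    -- ℓ' takes values in derivations of A
    (∀ (q : L × M) (a b : A), ℓ q.1 (a * b) = a * ℓ q.1 b + ℓ q.1 a * b) ∧
    -- ℓ' is a left representation of (L ⊕ M, ·') on A
    (∀ (q r : L × M) (a : A),
      ℓ (p q r - p r q).1 a = ℓ q.1 (ℓ r.1 a) - ℓ r.1 (ℓ q.1 a)) ∧
    -- ℓ'(a • q) = a ℓ'(q)
    (∀ (a : A) (q : L × M) (b : A), ℓ (a • q).1 b = a * ℓ q.1 b) ∧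
    -- compatibility conditions
    (∀ (q : L × M) (a : A) (r : L × M), p q (a • r) = ℓ q.1 a • r + a • p q r) ∧
    (∀ (a : A) (q r : L × M), p (a • q) r = a • p q r)) :=
  leftSymmetricRinehart_semidirect_general m ℓ ρ μ hls hder hrep hlA hc1 hc2 hρrep hρ1 hρ2 hμ1 hμ2
    hcompat
end

section
/- Let (L,A,·,ℓ) be a left-symmetric Rinehart algebra and (M;ρ,μ) a representation. Then (M, ρ−μ) is a representation of the sub-adjacent Lie-Rinehart algebra (L,A,[·,·],ℓ): i.e. (ρ−μ)([x,y]) = (ρ−μ)(x)(ρ−μ)(y) − (ρ−μ)(y)(ρ−μ)(x), (ρ−μ)(ax) = a(ρ−μ)(x), and (ρ−μ)(x)(am) = a(ρ−μ)(x)(m) + ℓ(x)(a)m. -/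
/-! Writing `θ = ρ - μ`, the bracket term `θ [x, y]` splits into `ρ [x, y]`, which is the commutator
of `ρ x` and `ρ y`, and `μ (x·y) - μ (y·x)`, which the compatibility condition, applied once to
`(x, y)` and once to `(y, x)`, rewrites as the mixed commutators `[ρ x, μ y] - [ρ y, μ x]` minus
the commutator `[μ x, μ y]`. These are exactly the cross terms of
`[ρ x - μ x, ρ y - μ y]`. The `A`-linearity in `x` and the anchor identity hold for `ρ` and `μ`
separately, with the anchor term contributed by `ρ` alone. -/

theorem LinearMap.sub_apply_bracket_eq_commutator {K L M : Type*} [CommSemiring K]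
    [AddCommGroup L] [Module K L] [AddCommGroup M] [Module K M]
    (m : L →ₗ[K] L →ₗ[K] L) (ρ μ : L →ₗ[K] M →ₗ[K] M)
    (hρrep : ∀ (x y : L) (v : M), ρ (m x y - m y x) v = ρ x (ρ y v) - ρ y (ρ x v))
    (hcompat : ∀ (x y : L) (v : M),
      ρ x (μ y v) - μ y (ρ x v) = μ (m x y) v - μ y (μ x v))
    (x y : L) (v : M) :
    (ρ - μ) (m x y - m y x) v = (ρ - μ) x ((ρ - μ) y v) - (ρ - μ) y ((ρ - μ) x v) := by
  have hρ := hρrep x y v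
  have hxy := hcompat x y v
  have hyx := hcompat y x v
  simp only [LinearMap.sub_apply, map_sub] at hρ ⊢
  linear_combination (norm := abel) hρ + hxy - hyx

theorem leftSymmetricRinehart_rep_subadjacent_general
    {K A L M : Type*} [Field K] [CommRing A] [Algebra K A]
    [AddCommGroup L] [Module K L] [Module A L]
    [AddCommGroup M] [Module K M] [Module A M]
    (m : L →ₗ[K] L →ₗ[K] L) (ℓ : L →ₗ[K] A →ₗ[K] A)
    (ρ μ : L →ₗ[K] M →ₗ[K] M)
    -- (M; ρ, μ) is a representation
    (hρrep : ∀ (x y : L) (v : M), ρ (m x y - m y x) v = ρ x (ρ y v) - ρ y (ρ x v))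
    (hρ1 : ∀ (a : A) (x : L) (v : M), ρ (a • x) v = a • ρ x v)
    (hρ2 : ∀ (x : L) (a : A) (v : M), ρ x (a • v) = a • ρ x v + ℓ x a • v)
    (hμ1 : ∀ (a : A) (x : L) (v : M), μ (a • x) v = a • μ x v)
    (hμ2 : ∀ (x : L) (a : A) (v : M), μ x (a • v) = a • μ x v)
    (hcompat : ∀ (x y : L) (v : M),
      ρ x (μ y v) - μ y (ρ x v) = μ (m x y) v - μ y (μ x v)) :
    let θ : L → M → M := fun x v => ρ x v - μ x v
    -- θ = ρ − μ is a Lie algebra representation of the sub-adjacent bracket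
    ((∀ (x y : L) (v : M),
      θ (m x y - m y x) v = θ x (θ y v) - θ y (θ x v)) ∧
    -- θ (a•x) = a θ x
    (∀ (a : A) (x : L) (v : M), θ (a • x) v = a • θ x v) ∧
    -- θ x (a•v) = a • θ x v + (ℓ x a) • v
    (∀ (x : L) (a : A) (v : M), θ x (a • v) = a • θ x v + ℓ x a • v)) := by
  intro θ
  refine ⟨LinearMap.sub_apply_bracket_eq_commutator m ρ μ hρrep hcompat,
    fun a x v => ?_, fun x a v => ?_⟩
  · simp only [θ, hρ1, hμ1, smul_sub]
  · simp only [θ, hρ2, hμ2, smul_sub]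
    abel

/-- For a left-symmetric Rinehart algebra `(L, A, m, ℓ)` with
representation `(M; ρ, μ)`, the pair `(M, ρ − μ)` is a representation of the
sub-adjacent Lie-Rinehart algebra `(L, A, [·,·], ℓ)`. -/
theorem leftSymmetricRinehart_rep_subadjacent
    {K A L M : Type*} [Field K] [CharZero K] [CommRing A] [Algebra K A]
    [AddCommGroup L] [Module K L] [Module A L] [IsScalarTower K A L]
    [AddCommGroup M] [Module K M] [Module A M] [IsScalarTower K A M]
    (m : L →ₗ[K] L →ₗ[K] L) (ℓ : L →ₗ[K] A →ₗ[K] A)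
    (ρ μ : L →ₗ[K] M →ₗ[K] M)
    -- left-symmetric Rinehart axioms for (L, A, m, ℓ)
    (hls : ∀ x y z : L, m (m x y) z - m x (m y z) = m (m y x) z - m y (m x z))
    (hder : ∀ (x : L) (a b : A), ℓ x (a * b) = a * ℓ x b + ℓ x a * b)
    (hrep : ∀ (x y : L) (a : A), ℓ (m x y - m y x) a = ℓ x (ℓ y a) - ℓ y (ℓ x a))
    (hlA : ∀ (a : A) (x : L) (b : A), ℓ (a • x) b = a * ℓ x b)
    (hc1 : ∀ (x : L) (a : A) (y : L), m x (a • y) = ℓ x a • y + a • m x y)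
    (hc2 : ∀ (a : A) (x y : L), m (a • x) y = a • m x y)
    -- (M; ρ, μ) is a representation
    (hρrep : ∀ (x y : L) (v : M), ρ (m x y - m y x) v = ρ x (ρ y v) - ρ y (ρ x v))
    (hρ1 : ∀ (a : A) (x : L) (v : M), ρ (a • x) v = a • ρ x v)
    (hρ2 : ∀ (x : L) (a : A) (v : M), ρ x (a • v) = a • ρ x v + ℓ x a • v)
    (hμ1 : ∀ (a : A) (x : L) (v : M), μ (a • x) v = a • μ x v)
    (hμ2 : ∀ (x : L) (a : A) (v : M), μ x (a • v) = a • μ x v)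
    (hcompat : ∀ (x y : L) (v : M),
      ρ x (μ y v) - μ y (ρ x v) = μ (m x y) v - μ y (μ x v)) :
    let θ : L → M → M := fun x v => ρ x v - μ x v
    -- θ = ρ − μ is a Lie algebra representation of the sub-adjacent bracket
    ((∀ (x y : L) (v : M),
      θ (m x y - m y x) v = θ x (θ y v) - θ y (θ x v)) ∧
    -- θ (a•x) = a θ x
    (∀ (a : A) (x : L) (v : M), θ (a • x) v = a • θ x v) ∧
    -- θ x (a•v) = a • θ x v + (ℓ x a) • v
    (∀ (x : L) (a : A) (v : M), θ x (a • v) = a • θ x v + ℓ x a • v)) :=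
  leftSymmetricRinehart_rep_subadjacent_general m ℓ ρ μ hρrep hρ1 hρ2 hμ1 hμ2 hcompat
end

section
/- For a left-symmetric algebra (L,·) with representation (M;ρ,μ), the coboundary operator δ: Cⁿ(L,M) → Cⁿ⁺¹(L,M) defined by (δω)(x₁,…,x_{n+1}) = Σᵢ₌₁ⁿ(−1)^{i+1}ρ(xᵢ)ω(x₁,…,x̂ᵢ,…,x_{n+1}) + Σᵢ₌₁ⁿ(−1)^{i+1}μ(x_{n+1})ω(x₁,…,x̂ᵢ,…,xₙ,xᵢ) − Σᵢ₌₁ⁿ(−1)^{i+1}ω(x₁,…,x̂ᵢ,…,xₙ,xᵢ·x_{n+1}) + Σ_{i<j}(−1)^{i+j}ω([xᵢ,xⱼ],x₁,…,x̂ᵢ,…,x̂ⱼ,…,x_{n+1}) satisfies δ² = 0. -/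
/-- The coboundary operator of a left-symmetric algebra `(L, m)` with
representation `(ρ, μ)` on `M`, acting on `(n+1)`-cochains
`ω : (Fin n → L) → L → M` (i.e. elements of `Hom(Λⁿ L ⊗ L, M)`), with
sub-adjacent bracket `br`:
`(δω)(x₁,…,x_{n+1}, z) = Σᵢ (−1)^{i+1} ρ(xᵢ) ω(…x̂ᵢ…, z)
 + Σᵢ (−1)^{i+1} μ(z) ω(…x̂ᵢ…, xᵢ) − Σᵢ (−1)^{i+1} ω(…x̂ᵢ…, xᵢ·z)
 + Σ_{i<j} (−1)^{i+j} ω([xᵢ,xⱼ], …x̂ᵢ…x̂ⱼ…, z)`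
(indices here are 0-based, which shifts the signs accordingly). -/
def lsaCob {L M : Type*} [AddCommGroup L] [AddCommGroup M]
    (ρ : L → M → M) (μ : L → M → M) (m : L → L → L) (br : L → L → L)
    (n : ℕ) (ω : (Fin n → L) → L → M) : (Fin (n + 1) → L) → L → M :=
  fun y z =>
    (∑ i : Fin (n + 1), (-1 : ℤ) ^ (i : ℕ) • ρ (y i) (ω (y ∘ i.succAbove) z))
    + (∑ i : Fin (n + 1), (-1 : ℤ) ^ (i : ℕ) • μ z (ω (y ∘ i.succAbove) (y i)))
    - (∑ i : Fin (n + 1), (-1 : ℤ) ^ (i : ℕ) • ω (y ∘ i.succAbove) (m (y i) z))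
    + (∑ i : Fin (n + 1), ∑ j : Fin (n + 1),
        if (i : ℕ) < (j : ℕ) then
          (-1 : ℤ) ^ ((i : ℕ) + (j : ℕ)) •
            ω (fun k : Fin n =>
                if (k : ℕ) = 0 then br (y i) (y j)
                else
                  y ⟨(if (k : ℕ) - 1 < (i : ℕ) then (k : ℕ) - 1
                      else if (k : ℕ) < (j : ℕ) then (k : ℕ)
                      else (k : ℕ) + 1) % (n + 1),
                     Nat.mod_lt _ (Nat.succ_pos n)⟩) z
        else 0)

/-!
For a left-symmetric algebra `L` the commutator `[x, y] = x·y - y·x` is a Lie bracket, and a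
representation `(ρ, μ)` on `M` makes `Hom(L, M)` a module over this sub-adjacent Lie algebra via
`(x ▷ f)(z) = ρ(x) f(z) + μ(z) f(x) - f(x·z)`. Reading `Cⁿ⁺¹(L, M)` as `Hom(Λⁿ L, Hom(L, M))`,
`δ` is the Chevalley–Eilenberg coboundary of this module, so `δ² = 0` is the classical `d² = 0`.
There the terms of `d²c` cancel in four families: double actions against actions of brackets
(the Leibniz rule of the module), actions on bracketed arguments among themselves (a reindexing),
nested brackets (the Jacobi identity), and pairs of brackets (antisymmetry of `c` in its first two
slots).
-/

open Finset

namespace LieCochain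

-- Cochains are evaluated on sequences `Y : ℕ → L`. `skip i` enumerates `ℕ ∖ {i}` increasingly
-- (the `ℕ`-version of `Fin.succAbove`), so `Y ∘ skip i` is `Y` with its `i`-th entry removed;
-- `skip₂ i j` (`i < j`) and `skip₃ p q r` (`p < q < r`) remove two or three entries, and
-- `unskip`, `unskip₂` give the position of an index once the others are removed.
def skip (i s : ℕ) : ℕ := if s < i then s else s + 1

def skip₂ (i j s : ℕ) : ℕ := if s < i then s else if s + 1 < j then s + 1 else s + 2

def skip₃ (p q r s : ℕ) : ℕ :=
  if s < p then s else if s + 1 < q then s + 1 else if s + 2 < r then s + 2 else s + 3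

def unskip (i r : ℕ) : ℕ := if r < i then r else r - 1

def unskip₂ (i j r : ℕ) : ℕ := r - (if i < r then 1 else 0) - (if j < r then 1 else 0)

lemma skip_lt {i s m : ℕ} (h : s < m) : skip i s < m + 1 := by
  unfold skip; split <;> omega

lemma skip₂_lt {i j s m : ℕ} (h : s < m) : skip₂ i j s < m + 2 := by
  unfold skip₂; split_ifs <;> omega

lemma skip_ne (i s : ℕ) : skip i s ≠ i := by
  unfold skip; split <;> omega

lemma skip₂_ne_left (i j s : ℕ) : skip₂ i j s ≠ i := by
  unfold skip₂; split_ifs <;> omega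

lemma skip₂_ne_right {i j : ℕ} (h : i < j) (s : ℕ) : skip₂ i j s ≠ j := by
  unfold skip₂; split_ifs <;> omega

lemma strictMono_skip (i : ℕ) : StrictMono (skip i) := fun a b h => by
  unfold skip; split_ifs <;> omega

lemma strictMono_skip₂ (i j : ℕ) : StrictMono (skip₂ i j) := fun a b h => by
  unfold skip₂; split_ifs <;> omega

lemma unskip_skip (i s : ℕ) : unskip i (skip i s) = s := by
  unfold skip unskip; split_ifs <;> omega

lemma skip_unskip {i r : ℕ} (h : r ≠ i) : skip i (unskip i r) = r := by
  unfold skip unskip; split_ifs <;> omega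

lemma unskip_lt {i r m : ℕ} (hr : r < m + 1) (hi : i < m + 1) (h : r ≠ i) : unskip i r < m := by
  unfold unskip; split_ifs <;> omega

lemma unskip_lt_unskip {i r r' : ℕ} (h : r < r') (hr : r ≠ i) (hr' : r' ≠ i) :
    unskip i r < unskip i r' := by
  unfold unskip; split_ifs <;> omega

lemma unskip₂_skip₂ {i j : ℕ} (h : i < j) (s : ℕ) : unskip₂ i j (skip₂ i j s) = s := by
  unfold skip₂ unskip₂; split_ifs <;> omega

lemma skip₂_unskip₂ {i j r : ℕ} (h : i < j) (hi : r ≠ i) (hj : r ≠ j) :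
    skip₂ i j (unskip₂ i j r) = r := by
  unfold skip₂ unskip₂; split_ifs <;> omega

lemma unskip₂_lt {i j r m : ℕ} (h : i < j) (hj : j < m + 2) (hr : r < m + 2) (hi : r ≠ i)
    (hj' : r ≠ j) : unskip₂ i j r < m := by
  unfold unskip₂; split_ifs <;> omega

lemma unskip₂_lt_unskip₂ {i j r r' : ℕ} (h : i < j) (hr : r < r') (hri : r ≠ i)
    (hrj : r ≠ j) (hr'i : r' ≠ i) (hr'j : r' ≠ j) : unskip₂ i j r < unskip₂ i j r' := by
  unfold unskip₂; split_ifs <;> omega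

lemma skip_of_lt {i s : ℕ} (h : s < i) : skip i s = s := if_pos h

lemma skip_pred {i j : ℕ} (h : i < j) : skip i (j - 1) = j := by
  unfold skip; split_ifs <;> omega

lemma skip₂_of_lt {i j s : ℕ} (h : s < i) : skip₂ i j s = s := if_pos h

lemma skip₂_pred {i j q : ℕ} (hi : i < q) (hj : q < j) : skip₂ i j (q - 1) = q := by
  unfold skip₂; split_ifs <;> omega

lemma skip₂_sub_two {i j r : ℕ} (hi : i < j) (hj : j < r) : skip₂ i j (r - 2) = r := by
  unfold skip₂; split_ifs <;> omega

lemma skip_comp_skip_pred {i j : ℕ} (h : i < j) : skip i ∘ skip (j - 1) = skip₂ i j := by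
  funext s; simp only [Function.comp, skip, skip₂]; split_ifs <;> omega

lemma skip_comp_skip_of_lt {i a : ℕ} (h : a < i) : skip i ∘ skip a = skip₂ a i := by
  funext s; simp only [Function.comp, skip, skip₂]; split_ifs <;> omega

lemma skip₂_skip_comp_skip_unskip₂ {r a b : ℕ} (h : a < b) :
    skip₂ (skip r a) (skip r b) ∘ skip (unskip₂ (skip r a) (skip r b) r)
      = skip r ∘ skip₂ a b := by
  funext s; simp only [Function.comp, skip, skip₂, unskip₂]; split_ifs <;> omega

lemma skip₂_comp_skip_of_lt {p q r : ℕ} (h : p < q) :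
    skip₂ q r ∘ skip p = skip₃ p q r := by
  funext s; simp only [Function.comp, skip, skip₂, skip₃]; split_ifs <;> omega

lemma skip₂_comp_skip_pred {p q r : ℕ} (hpq : p < q) (hqr : q < r) :
    skip₂ p r ∘ skip (q - 1) = skip₃ p q r := by
  funext s; simp only [Function.comp, skip, skip₂, skip₃]; split_ifs <;> omega

lemma skip₂_comp_skip_sub_two {p q r : ℕ} (hpq : p < q) (hqr : q < r) :
    skip₂ p q ∘ skip (r - 2) = skip₃ p q r := by
  funext s; simp only [Function.comp, skip, skip₂, skip₃]; split_ifs <;> omega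

lemma skip₂_comp_skip₂_unskip₂_comm {i j u v : ℕ} (hij : i < j) (huv : u < v)
    (hui : u ≠ i) (huj : u ≠ j) (hvi : v ≠ i) (hvj : v ≠ j) :
    skip₂ i j ∘ skip₂ (unskip₂ i j u) (unskip₂ i j v)
      = skip₂ u v ∘ skip₂ (unskip₂ u v i) (unskip₂ u v j) := by
  wlog hiu : i < u generalizing i j u v
  · exact (this huv hij hui.symm hvi.symm huj.symm hvj.symm (by omega)).symm
  have e0 : ∀ {a b r : ℕ}, a < b → r < a → unskip₂ a b r = r := by
    intro a b r h h'; unfold unskip₂; split_ifs <;> omega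
  have e1 : ∀ {a b r : ℕ}, a < r → r < b → unskip₂ a b r = r - 1 := by
    intro a b r h h'; unfold unskip₂; split_ifs <;> omega
  have e2 : ∀ {a b r : ℕ}, a < b → b < r → unskip₂ a b r = r - 2 := by
    intro a b r h h'; unfold unskip₂; split_ifs <;> omega
  funext s
  simp only [Function.comp]
  rcases lt_or_gt_of_ne huj with huj | huj
  · rcases lt_or_gt_of_ne hvj with hvj | hvj
    · rw [e1 hiu huj, e1 (hiu.trans huv) hvj, e0 huv hiu, e2 huv (by omega)]
      unfold skip₂; split_ifs <;> omega
    · rw [e1 hiu huj, e2 hij hvj, e0 huv hiu, e1 huj hvj]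
      unfold skip₂; split_ifs <;> omega
  · rw [e2 hij huj, e2 hij (huj.trans huv), e0 huv hiu, e0 huv huj]
    unfold skip₂; split_ifs <;> omega

lemma neg_one_pow_eq_of_mod_two {a b : ℕ} (h : a % 2 = b % 2) : (-1 : ℤ) ^ a = (-1) ^ b := by
  rw [neg_one_pow_eq_pow_mod_two, h, ← neg_one_pow_eq_pow_mod_two]

lemma neg_one_pow_eq_neg_of_mod_two {a b : ℕ} (h : a % 2 = (b + 1) % 2) :
    (-1 : ℤ) ^ a = -(-1) ^ b := by
  rw [neg_one_pow_eq_of_mod_two h, pow_succ, mul_neg_one]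

lemma neg_one_pow_skip_unskip₂ {r a b : ℕ} (h : a < b) :
    (-1 : ℤ) ^ (skip r a + skip r b + (unskip₂ (skip r a) (skip r b) r + 1))
      = -(-1) ^ (r + (a + b)) :=
  neg_one_pow_eq_neg_of_mod_two (by unfold skip unskip₂; split_ifs <;> omega)

lemma neg_one_pow_unskip₂_comm {i j u v : ℕ} (hij : i < j) (huv : u < v) (hui : u ≠ i)
    (huj : u ≠ j) (hvi : v ≠ i) (hvj : v ≠ j) :
    (-1 : ℤ) ^ (u + v + (unskip₂ u v i + unskip₂ u v j))
      = (-1) ^ (i + j + (unskip₂ i j u + unskip₂ i j v)) :=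
  neg_one_pow_eq_of_mod_two (by unfold unskip₂; split_ifs <;> omega)

lemma val_succAbove {k : ℕ} (i : Fin (k + 1)) (l : Fin k) : (i.succAbove l : ℕ) = skip i l := by
  simp only [Fin.succAbove, skip, Fin.lt_def]
  split_ifs <;> simp_all

def seqCons {α : Type*} (e : α) (Y : ℕ → α) : ℕ → α
  | 0 => e
  | k + 1 => Y k

@[simp] lemma seqCons_zero {α : Type*} (e : α) (Y : ℕ → α) : seqCons e Y 0 = e := rfl

@[simp] lemma seqCons_succ {α : Type*} (e : α) (Y : ℕ → α) (k : ℕ) :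
    seqCons e Y (k + 1) = Y k := rfl

section Comp

variable {α : Type*} (e : α) (Z : ℕ → α)

lemma seqCons_comp_skip_zero : seqCons e Z ∘ skip 0 = Z := by
  funext s; simp [skip]

lemma seqCons_comp_skip_succ (a : ℕ) :
    seqCons e Z ∘ skip (a + 1) = seqCons e (Z ∘ skip a) := by
  funext s
  rcases s with _ | s
  · simp [skip]
  · rw [Function.comp_apply, show skip (a + 1) (s + 1) = skip a s + 1 by
      unfold skip; split_ifs <;> omega]
    rfl

lemma seqCons_comp_skip₂_zero_succ (b : ℕ) :
    seqCons e Z ∘ skip₂ 0 (b + 1) = Z ∘ skip b := by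
  funext s
  rw [Function.comp_apply, show skip₂ 0 (b + 1) s = skip b s + 1 by
    unfold skip skip₂; split_ifs <;> omega]
  rfl

lemma seqCons_comp_skip₂_succ_succ (a b : ℕ) :
    seqCons e Z ∘ skip₂ (a + 1) (b + 1) = seqCons e (Z ∘ skip₂ a b) := by
  funext s
  rcases s with _ | s
  · simp [skip₂]
  · rw [Function.comp_apply, show skip₂ (a + 1) (b + 1) (s + 1) = skip₂ a b s + 1 by
      unfold skip₂; split_ifs <;> omega]
    rfl

end Comp

def pairs (N : ℕ) : Finset (ℕ × ℕ) := (range N ×ˢ range N).filter fun p => p.1 < p.2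

@[simp] lemma mem_pairs {N : ℕ} {p : ℕ × ℕ} : p ∈ pairs N ↔ p.1 < p.2 ∧ p.2 < N := by
  simp only [pairs, mem_filter, mem_product, mem_range]; omega

def triples (N : ℕ) : Finset (ℕ × ℕ × ℕ) :=
  (range N ×ˢ range N ×ˢ range N).filter fun t => t.1 < t.2.1 ∧ t.2.1 < t.2.2

@[simp] lemma mem_triples {N : ℕ} {t : ℕ × ℕ × ℕ} :
    t ∈ triples N ↔ t.1 < t.2.1 ∧ t.2.1 < t.2.2 ∧ t.2.2 < N := by
  simp only [triples, mem_filter, mem_product, mem_range]; omega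

def disjointPairs (N : ℕ) : Finset ((ℕ × ℕ) × (ℕ × ℕ)) :=
  (pairs N ×ˢ pairs N).filter fun x =>
    x.2.1 ≠ x.1.1 ∧ x.2.1 ≠ x.1.2 ∧ x.2.2 ≠ x.1.1 ∧ x.2.2 ≠ x.1.2

@[simp] lemma mem_disjointPairs {N : ℕ} {x : (ℕ × ℕ) × (ℕ × ℕ)} :
    x ∈ disjointPairs N ↔ (x.1 ∈ pairs N ∧ x.2 ∈ pairs N) ∧
      x.2.1 ≠ x.1.1 ∧ x.2.1 ≠ x.1.2 ∧ x.2.2 ≠ x.1.1 ∧ x.2.2 ≠ x.1.2 := by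
  simp only [disjointPairs, mem_filter, mem_product]

section Reindex

variable {W : Type*} [AddCommMonoid W]

lemma sum_pairs_succ (N : ℕ) (F : ℕ × ℕ → W) :
    ∑ p ∈ pairs (N + 1), F p
      = ∑ b ∈ range N, F (0, b + 1) + ∑ p ∈ pairs N, F (p.1 + 1, p.2 + 1) := by
  simp only [pairs, sum_filter, sum_product]
  rw [sum_range_succ', sum_range_succ', add_comm]
  simp [sum_range_succ']

lemma sum_range_sum_range_eq_sum_pairs (N : ℕ) (F : ℕ → ℕ → W) :
    ∑ i ∈ range (N + 1), ∑ a ∈ range N, F i a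
      = ∑ p ∈ pairs (N + 1), (F p.1 (p.2 - 1) + F p.2 p.1) := by
  rw [← sum_product', ← sum_filter_add_sum_filter_not _ (fun x => x.1 ≤ x.2), sum_add_distrib]
  congr 1
  · refine sum_nbij' (fun x => (x.1, x.2 + 1)) (fun p => (p.1, p.2 - 1)) ?_ ?_ ?_ ?_ ?_
    · rintro ⟨i, a⟩ h
      simp only [mem_filter, mem_product, mem_range, mem_pairs] at h ⊢; omega
    · rintro ⟨i, j⟩ h
      simp only [mem_filter, mem_product, mem_range, mem_pairs] at h ⊢; omega
    · rintro ⟨i, a⟩ _; simp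
    · rintro ⟨i, j⟩ h; simp only [mem_pairs] at h; ext <;> simp; omega
    · rintro ⟨i, a⟩ _; simp
  · refine sum_nbij' Prod.swap Prod.swap ?_ ?_ ?_ ?_ ?_
    · rintro ⟨i, a⟩ h
      simp only [mem_filter, mem_product, mem_range, mem_pairs, Prod.fst_swap,
        Prod.snd_swap] at h ⊢; omega
    · rintro ⟨i, j⟩ h
      simp only [mem_filter, mem_product, mem_range, mem_pairs, Prod.fst_swap,
        Prod.snd_swap] at h ⊢; omega
    · rintro ⟨i, a⟩ _; rfl
    · rintro ⟨i, j⟩ _; rfl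
    · rintro ⟨i, a⟩ _; rfl

-- Both sides enumerate a pair `i < j` together with a third index `r = skip₂ i j a`.
lemma sum_pairs_sum_range_eq_sum_range_sum_pairs (N : ℕ) (F : ℕ × ℕ → ℕ → W) :
    ∑ p ∈ pairs (N + 2), ∑ a ∈ range N, F p a
      = ∑ r ∈ range (N + 2), ∑ q ∈ pairs (N + 1),
          F (skip r q.1, skip r q.2) (unskip₂ (skip r q.1) (skip r q.2) r) := by
  rw [← sum_product', ← sum_product']
  refine sum_nbij'
    (fun x => (skip₂ x.1.1 x.1.2 x.2,
      (unskip (skip₂ x.1.1 x.1.2 x.2) x.1.1, unskip (skip₂ x.1.1 x.1.2 x.2) x.1.2)))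
    (fun y => ((skip y.1 y.2.1, skip y.1 y.2.2),
      unskip₂ (skip y.1 y.2.1) (skip y.1 y.2.2) y.1)) ?_ ?_ ?_ ?_ ?_
  · rintro ⟨⟨i, j⟩, a⟩ h
    simp only [mem_product, mem_range, mem_pairs] at h ⊢
    exact ⟨skip₂_lt h.2, unskip_lt_unskip h.1.1 (skip₂_ne_left i j a).symm
      (skip₂_ne_right h.1.1 a).symm,
      unskip_lt (by omega) (skip₂_lt h.2) (skip₂_ne_right h.1.1 a).symm⟩
  · rintro ⟨r, a, b⟩ h
    simp only [mem_product, mem_range, mem_pairs] at h ⊢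
    exact ⟨⟨strictMono_skip r h.2.1, skip_lt h.2.2⟩,
      unskip₂_lt (strictMono_skip r h.2.1) (skip_lt h.2.2) h.1 (skip_ne r a).symm
        (skip_ne r b).symm⟩
  · rintro ⟨⟨i, j⟩, a⟩ h
    simp only [mem_product, mem_pairs] at h
    simp only [skip_unskip (skip₂_ne_left i j a).symm,
      skip_unskip (skip₂_ne_right h.1.1 a).symm, unskip₂_skip₂ h.1.1]
  · rintro ⟨r, a, b⟩ h
    simp only [mem_product, mem_pairs] at h
    simp only [skip₂_unskip₂ (strictMono_skip r h.2.1) (skip_ne r a).symm (skip_ne r b).symm,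
      unskip_skip]
  · rintro ⟨⟨i, j⟩, a⟩ h
    simp only [mem_product, mem_pairs] at h
    simp only [skip_unskip (skip₂_ne_left i j a).symm,
      skip_unskip (skip₂_ne_right h.1.1 a).symm, unskip₂_skip₂ h.1.1]

lemma sum_pairs_sum_range_eq_sum_triples (N : ℕ) (F : ℕ × ℕ → ℕ → W) :
    ∑ p ∈ pairs (N + 2), ∑ b ∈ range N, F p b
      = ∑ t ∈ triples (N + 2),
          (F (t.2.1, t.2.2) t.1 + F (t.1, t.2.2) (t.2.1 - 1) + F (t.1, t.2.1) (t.2.2 - 2)) := by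
  set S := pairs (N + 2) ×ˢ range N
  rw [← sum_product', ← sum_filter_add_sum_filter_not S (fun x => x.2 < x.1.1),
    ← sum_filter_add_sum_filter_not (S.filter fun x => ¬x.2 < x.1.1) (fun x => x.2 + 1 < x.1.2),
    sum_add_distrib, sum_add_distrib, add_assoc]
  congr 1
  · refine sum_nbij' (fun x => (x.2, x.1.1, x.1.2)) (fun t => ((t.2.1, t.2.2), t.1))
      ?_ ?_ ?_ ?_ ?_
    · rintro ⟨⟨i, j⟩, b⟩ h
      simp only [S, mem_filter, mem_product, mem_range, mem_pairs, mem_triples] at h ⊢; omega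
    · rintro ⟨p, q, r⟩ h
      simp only [S, mem_filter, mem_product, mem_range, mem_pairs, mem_triples] at h ⊢; omega
    · rintro ⟨⟨i, j⟩, b⟩ _; rfl
    · rintro ⟨p, q, r⟩ _; rfl
    · rintro ⟨⟨i, j⟩, b⟩ _; rfl
  congr 1
  · refine sum_nbij' (fun x => (x.1.1, x.2 + 1, x.1.2)) (fun t => ((t.1, t.2.2), t.2.1 - 1))
      ?_ ?_ ?_ ?_ ?_
    · rintro ⟨⟨i, j⟩, b⟩ h
      simp only [S, mem_filter, mem_product, mem_range, mem_pairs, mem_triples] at h ⊢; omega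
    · rintro ⟨p, q, r⟩ h
      simp only [S, mem_filter, mem_product, mem_range, mem_pairs, mem_triples] at h ⊢; omega
    · rintro ⟨⟨i, j⟩, b⟩ _; simp
    · rintro ⟨p, q, r⟩ h; simp only [mem_triples] at h; ext <;> simp; omega
    · rintro ⟨⟨i, j⟩, b⟩ _; simp
  · refine sum_nbij' (fun x => (x.1.1, x.1.2, x.2 + 2)) (fun t => ((t.1, t.2.1), t.2.2 - 2))
      ?_ ?_ ?_ ?_ ?_
    · rintro ⟨⟨i, j⟩, b⟩ h
      simp only [S, mem_filter, mem_product, mem_range, mem_pairs, mem_triples] at h ⊢; omega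
    · rintro ⟨p, q, r⟩ h
      simp only [S, mem_filter, mem_product, mem_range, mem_pairs, mem_triples] at h ⊢; omega
    · rintro ⟨⟨i, j⟩, b⟩ _; simp
    · rintro ⟨p, q, r⟩ h; simp only [mem_triples] at h; ext <;> simp; omega
    · rintro ⟨⟨i, j⟩, b⟩ _; simp

lemma sum_pairs_sum_pairs_eq_sum_disjointPairs (N : ℕ) (F : ℕ × ℕ → ℕ × ℕ → W) :
    ∑ p ∈ pairs (N + 2), ∑ q ∈ pairs N, F p q
      = ∑ x ∈ disjointPairs (N + 2),
          F x.1 (unskip₂ x.1.1 x.1.2 x.2.1, unskip₂ x.1.1 x.1.2 x.2.2) := by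
  rw [← sum_product']
  refine sum_nbij' (fun x => (x.1, skip₂ x.1.1 x.1.2 x.2.1, skip₂ x.1.1 x.1.2 x.2.2))
    (fun x => (x.1, unskip₂ x.1.1 x.1.2 x.2.1, unskip₂ x.1.1 x.1.2 x.2.2)) ?_ ?_ ?_ ?_ ?_
  · rintro ⟨⟨i, j⟩, a, b⟩ h
    simp only [mem_disjointPairs, mem_product, mem_pairs] at h ⊢
    exact ⟨⟨h.1, strictMono_skip₂ i j h.2.1, skip₂_lt h.2.2⟩, skip₂_ne_left i j a,
      skip₂_ne_right h.1.1 a, skip₂_ne_left i j b, skip₂_ne_right h.1.1 b⟩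
  · rintro ⟨⟨i, j⟩, u, v⟩ h
    simp only [mem_disjointPairs, mem_product, mem_pairs] at h ⊢
    obtain ⟨⟨⟨hij, hj⟩, huv, hv⟩, hui, huj, hvi, hvj⟩ := h
    exact ⟨⟨hij, hj⟩, unskip₂_lt_unskip₂ hij huv hui huj hvi hvj,
      unskip₂_lt hij hj hv hvi hvj⟩
  · rintro ⟨⟨i, j⟩, a, b⟩ h
    simp only [mem_product, mem_pairs] at h
    simp only [unskip₂_skip₂ h.1.1]
  · rintro ⟨⟨i, j⟩, u, v⟩ h
    simp only [mem_disjointPairs, mem_pairs] at h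
    obtain ⟨⟨⟨hij, _⟩, _⟩, hui, huj, hvi, hvj⟩ := h
    simp only [skip₂_unskip₂ hij hui huj, skip₂_unskip₂ hij hvi hvj]
  · rintro ⟨⟨i, j⟩, a, b⟩ h
    simp only [mem_product, mem_pairs] at h
    simp only [unskip₂_skip₂ h.1.1]

end Reindex

section Bracket

variable {L V : Type*} [Bracket L L] [AddCommGroup V] [Bracket L V]

-- An `n`-cochain reads only the first `n` terms of a sequence (cf. `coboundary_congr`); as in
-- `lsaCob`, the bracket of two removed entries goes into the first slot.
def coboundary (n : ℕ) (C : (ℕ → L) → V) (Y : ℕ → L) : V :=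
  (∑ i ∈ range (n + 1), (-1 : ℤ) ^ i • ⁅Y i, C (Y ∘ skip i)⁆)
  + ∑ p ∈ pairs (n + 1),
      (-1 : ℤ) ^ (p.1 + p.2) • C (seqCons ⁅Y p.1, Y p.2⁆ (Y ∘ skip₂ p.1 p.2))

lemma coboundary_seqCons (n : ℕ) (C : (ℕ → L) → V) (e : L) (Z : ℕ → L) :
    coboundary n C (seqCons e Z)
      = ⁅e, C Z⁆
        + (∑ a ∈ range n, (-1 : ℤ) ^ (a + 1) • ⁅Z a, C (seqCons e (Z ∘ skip a))⁆)
        + (∑ b ∈ range n, (-1 : ℤ) ^ (b + 1) • C (seqCons ⁅e, Z b⁆ (Z ∘ skip b)))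
        + ∑ p ∈ pairs n, (-1 : ℤ) ^ (p.1 + p.2) •
            C (seqCons ⁅Z p.1, Z p.2⁆ (seqCons e (Z ∘ skip₂ p.1 p.2))) := by
  rw [coboundary, sum_range_succ', sum_pairs_succ]
  simp only [seqCons_zero, seqCons_succ, seqCons_comp_skip_zero, seqCons_comp_skip_succ,
    seqCons_comp_skip₂_zero_succ, seqCons_comp_skip₂_succ_succ, pow_zero, one_smul, zero_add]
  have hsign : ∀ a b : ℕ, (-1 : ℤ) ^ (a + 1 + (b + 1)) = (-1) ^ (a + b) := fun a b =>
    neg_one_pow_eq_of_mod_two (by omega)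
  simp only [hsign]
  abel

lemma coboundary_congr (n : ℕ) {C : (ℕ → L) → V}
    (hC : ∀ Y Y' : ℕ → L, (∀ k < n, Y k = Y' k) → C Y = C Y') {Y Y' : ℕ → L}
    (h : ∀ k < n + 1, Y k = Y' k) : coboundary n C Y = coboundary n C Y' := by
  unfold coboundary
  congr 1
  · refine sum_congr rfl fun i hi => ?_
    rw [mem_range] at hi
    rw [h i hi, hC (Y ∘ skip i) (Y' ∘ skip i) fun k hk => h _ (skip_lt hk)]
  · refine sum_congr rfl fun p hp => ?_
    rw [mem_pairs] at hp
    rw [h p.1 (by omega), h p.2 hp.2]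
    congr 1
    refine hC _ _ fun k hk => ?_
    rcases k with _ | k
    · rfl
    · exact h _ (by have := skip₂_lt (i := p.1) (j := p.2) (show k < n - 1 by omega); omega)

end Bracket

section Swap

variable {L V : Type*} [Bracket L L] [AddCommGroup V]

lemma coboundary_sq_swap_terms (n : ℕ) (C : (ℕ → L) → V)
    (hswap : 1 < n → ∀ e e' Z, C (seqCons e (seqCons e' Z)) = -C (seqCons e' (seqCons e Z)))
    (Y : ℕ → L) :
    ∑ p ∈ pairs (n + 2), ∑ q ∈ pairs n, (-1 : ℤ) ^ (p.1 + p.2 + (q.1 + q.2)) •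
        C (seqCons ⁅Y (skip₂ p.1 p.2 q.1), Y (skip₂ p.1 p.2 q.2)⁆
          (seqCons ⁅Y p.1, Y p.2⁆ (Y ∘ (skip₂ p.1 p.2 ∘ skip₂ q.1 q.2))))
      = 0 := by
  rw [sum_pairs_sum_pairs_eq_sum_disjointPairs]
  refine sum_involution (fun x _ => x.swap) ?_ ?_ ?_ (fun x _ => x.swap_swap)
  · rintro ⟨⟨i, j⟩, u, v⟩ h
    simp only [mem_disjointPairs, mem_pairs] at h
    obtain ⟨⟨⟨hij, hj⟩, huv, hv⟩, hui, huj, hvi, hvj⟩ := h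
    have hn : 1 < n := by
      have := unskip₂_lt_unskip₂ hij huv hui huj hvi hvj
      have := unskip₂_lt hij hj hv hvi hvj
      omega
    simp only [Prod.fst_swap, Prod.snd_swap, skip₂_unskip₂ hij hui huj, skip₂_unskip₂ hij hvi hvj,
      skip₂_unskip₂ huv hui.symm hvi.symm, skip₂_unskip₂ huv huj.symm hvj.symm]
    rw [neg_one_pow_unskip₂_comm hij huv hui huj hvi hvj,
      skip₂_comp_skip₂_unskip₂_comm hij huv hui huj hvi hvj, hswap hn, smul_neg,
      neg_add_cancel]
  · rintro ⟨⟨i, j⟩, u, v⟩ h _ heq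
    simp only [mem_disjointPairs] at h
    exact h.2.1 (congrArg (fun x => x.1.1) heq)
  · rintro ⟨⟨i, j⟩, u, v⟩ h
    simp only [mem_disjointPairs, Prod.fst_swap, Prod.snd_swap] at h ⊢
    exact ⟨⟨h.1.2, h.1.1⟩, h.2.1.symm, h.2.2.2.1.symm, h.2.2.1.symm, h.2.2.2.2.symm⟩

end Swap

section LieRing

variable {L V : Type*} [LieRing L] [AddCommGroup V]

lemma lie_lie_eq_lie_lie_add_lie_lie (x y z : L) :
    ⁅⁅x, z⁆, y⁆ = ⁅⁅x, y⁆, z⁆ + ⁅⁅y, z⁆, x⁆ := by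
  rw [← lie_skew ⁅y, z⁆ x, ← lie_skew ⁅x, z⁆ y, leibniz_lie x y z]
  abel

lemma coboundary_sq_jacobi_terms (n : ℕ) (C : (ℕ → L) → V)
    (hadd : 0 < n → ∀ e e' Z, C (seqCons (e + e') Z) = C (seqCons e Z) + C (seqCons e' Z))
    (Y : ℕ → L) :
    ∑ p ∈ pairs (n + 2), ∑ b ∈ range n, (-1 : ℤ) ^ (p.1 + p.2 + (b + 1)) •
        C (seqCons ⁅⁅Y p.1, Y p.2⁆, Y (skip₂ p.1 p.2 b)⁆
          (Y ∘ (skip₂ p.1 p.2 ∘ skip b)))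
      = 0 := by
  rw [sum_pairs_sum_range_eq_sum_triples]
  refine sum_eq_zero fun ⟨p, q, r⟩ h => ?_
  simp only [mem_triples] at h
  obtain ⟨hpq, hqr, hrn⟩ := h
  simp only [skip₂_of_lt hpq, skip₂_pred hpq hqr, skip₂_sub_two hpq hqr,
    skip₂_comp_skip_of_lt hpq, skip₂_comp_skip_pred hpq hqr,
    skip₂_comp_skip_sub_two hpq hqr, lie_lie_eq_lie_lie_add_lie_lie (Y p) (Y q) (Y r),
    hadd (by omega : 0 < n)]
  rw [neg_one_pow_eq_of_mod_two (show (q + r + (p + 1)) % 2 = (p + q + r + 1) % 2 by omega),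
    neg_one_pow_eq_neg_of_mod_two
      (show (p + r + (q - 1 + 1)) % 2 = (p + q + r + 1 + 1) % 2 by omega),
    neg_one_pow_eq_of_mod_two (show (p + q + (r - 2 + 1)) % 2 = (p + q + r + 1) % 2 by omega),
    neg_smul, smul_add]
  abel

end LieRing

section Tuples

variable {L V : Type*} [AddCommGroup L] [AddCommGroup V]

lemma eq_neg_swap_of_alternating (φ : L → L → V)
    (hl : ∀ a b c, φ (a + b) c = φ a c + φ b c)
    (hr : ∀ a b c, φ a (b + c) = φ a b + φ a c) (h0 : ∀ a, φ a a = 0) (a b : L) :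
    φ a b = -φ b a := by
  have h := h0 (a + b)
  rw [hl, hr, hr, h0, h0, zero_add, add_zero] at h
  exact eq_neg_of_add_eq_zero_left h

variable {n : ℕ} (c : (Fin n → L) → V)

lemma map_seqCons_add
    (hadd : ∀ (w : Fin n → L) (i : Fin n) (v₁ v₂ : L),
      c (Function.update w i (v₁ + v₂))
        = c (Function.update w i v₁) + c (Function.update w i v₂))
    (hn : 0 < n) (e e' : L) (Z : ℕ → L) :
    c (fun k : Fin n => seqCons (e + e') Z k)
      = c (fun k : Fin n => seqCons e Z k) + c (fun k : Fin n => seqCons e' Z k) := by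
  have slot : ∀ a, (fun k : Fin n => seqCons a Z k)
      = Function.update (fun k : Fin n => seqCons 0 Z k) ⟨0, hn⟩ a := by
    intro a; funext ⟨k, hk⟩
    rcases k with _ | k <;> simp [Function.update, Fin.ext_iff]
  rw [slot (e + e'), slot e, slot e', hadd]

lemma map_seqCons_swap
    (hadd : ∀ (w : Fin n → L) (i : Fin n) (v₁ v₂ : L),
      c (Function.update w i (v₁ + v₂))
        = c (Function.update w i v₁) + c (Function.update w i v₂))
    (halt : ∀ (w : Fin n → L) (i j : Fin n), i ≠ j → w i = w j → c w = 0)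
    (hn : 1 < n) (e e' : L) (Z : ℕ → L) :
    c (fun k : Fin n => seqCons e (seqCons e' Z) k)
      = -c (fun k : Fin n => seqCons e' (seqCons e Z) k) := by
  set i₀ : Fin n := ⟨0, by omega⟩
  set i₁ : Fin n := ⟨1, hn⟩
  have h01 : i₀ ≠ i₁ := by simp [i₀, i₁, Fin.ext_iff]
  set w : Fin n → L := fun k : Fin n => seqCons 0 (seqCons 0 Z) k
  have slots : ∀ a b, (fun k : Fin n => seqCons a (seqCons b Z) k)
      = Function.update (Function.update w i₀ a) i₁ b := by
    intro a b; funext ⟨k, hk⟩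
    rcases k with _ | _ | k <;> simp [w, i₀, i₁, Function.update, Fin.ext_iff]
  rw [slots e e', slots e' e]
  refine eq_neg_swap_of_alternating
    (fun a b => c (Function.update (Function.update w i₀ a) i₁ b))
    (fun a b d => ?_) (fun a b d => hadd _ _ _ _) (fun a => halt _ i₀ i₁ h01 (by simp [h01]))
    e e'
  simp only [Function.update_comm h01 _ d w]
  exact hadd _ _ _ _

end Tuples

section LieModule

variable {L V : Type*} [LieRing L] [AddCommGroup V] [LieRingModule L V]

lemma sum_lie_coboundary_comp_skip (n : ℕ) (C : (ℕ → L) → V) (Y : ℕ → L) :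
    ∑ i ∈ range (n + 2), (-1 : ℤ) ^ i • ⁅Y i, coboundary n C (Y ∘ skip i)⁆
      = (∑ i ∈ range (n + 2), ∑ a ∈ range (n + 1),
          (-1 : ℤ) ^ (i + a) • ⁅Y i, ⁅Y (skip i a), C (Y ∘ (skip i ∘ skip a))⁆⁆)
        + ∑ i ∈ range (n + 2), ∑ q ∈ pairs (n + 1), (-1 : ℤ) ^ (i + (q.1 + q.2)) •
            ⁅Y i, C (seqCons ⁅Y (skip i q.1), Y (skip i q.2)⁆
              (Y ∘ (skip i ∘ skip₂ q.1 q.2)))⁆ := by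
  rw [← sum_add_distrib]
  refine sum_congr rfl fun i _ => ?_
  simp only [coboundary, lie_add, lie_sum, lie_zsmul, smul_add, smul_sum, smul_smul, ← pow_add]
  rfl

lemma sum_coboundary_seqCons_bracket (n : ℕ) (C : (ℕ → L) → V) (Y : ℕ → L) :
    ∑ p ∈ pairs (n + 2), (-1 : ℤ) ^ (p.1 + p.2) •
        coboundary n C (seqCons ⁅Y p.1, Y p.2⁆ (Y ∘ skip₂ p.1 p.2))
      = (∑ p ∈ pairs (n + 2),
          (-1 : ℤ) ^ (p.1 + p.2) • ⁅⁅Y p.1, Y p.2⁆, C (Y ∘ skip₂ p.1 p.2)⁆)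
        + (∑ p ∈ pairs (n + 2), ∑ a ∈ range n, (-1 : ℤ) ^ (p.1 + p.2 + (a + 1)) •
            ⁅Y (skip₂ p.1 p.2 a),
              C (seqCons ⁅Y p.1, Y p.2⁆ (Y ∘ (skip₂ p.1 p.2 ∘ skip a)))⁆)
        + (∑ p ∈ pairs (n + 2), ∑ b ∈ range n, (-1 : ℤ) ^ (p.1 + p.2 + (b + 1)) •
            C (seqCons ⁅⁅Y p.1, Y p.2⁆, Y (skip₂ p.1 p.2 b)⁆
              (Y ∘ (skip₂ p.1 p.2 ∘ skip b))))
        + ∑ p ∈ pairs (n + 2), ∑ q ∈ pairs n, (-1 : ℤ) ^ (p.1 + p.2 + (q.1 + q.2)) •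
            C (seqCons ⁅Y (skip₂ p.1 p.2 q.1), Y (skip₂ p.1 p.2 q.2)⁆
              (seqCons ⁅Y p.1, Y p.2⁆ (Y ∘ (skip₂ p.1 p.2 ∘ skip₂ q.1 q.2)))) := by
  simp only [← sum_add_distrib]
  refine sum_congr rfl fun p _ => ?_
  simp only [coboundary_seqCons, smul_add, smul_sum, smul_smul, ← pow_add]
  rfl


lemma coboundary_sq_leibniz_terms (n : ℕ) (C : (ℕ → L) → V) (Y : ℕ → L) :
    (∑ i ∈ range (n + 2), ∑ a ∈ range (n + 1),
        (-1 : ℤ) ^ (i + a) • ⁅Y i, ⁅Y (skip i a), C (Y ∘ (skip i ∘ skip a))⁆⁆)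
      + ∑ p ∈ pairs (n + 2),
          (-1 : ℤ) ^ (p.1 + p.2) • ⁅⁅Y p.1, Y p.2⁆, C (Y ∘ skip₂ p.1 p.2)⁆
      = 0 := by
  rw [sum_range_sum_range_eq_sum_pairs, ← sum_add_distrib]
  refine sum_eq_zero fun ⟨i, j⟩ h => ?_
  simp only [mem_pairs] at h
  rw [skip_pred h.1, skip_of_lt h.1, skip_comp_skip_pred h.1, skip_comp_skip_of_lt h.1,
    add_comm j i,
    neg_one_pow_eq_neg_of_mod_two (show (i + (j - 1)) % 2 = (i + j + 1) % 2 by omega),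
    leibniz_lie, neg_smul, smul_add]
  abel

lemma coboundary_sq_mixed_terms (n : ℕ) (C : (ℕ → L) → V) (Y : ℕ → L) :
    (∑ i ∈ range (n + 2), ∑ q ∈ pairs (n + 1), (-1 : ℤ) ^ (i + (q.1 + q.2)) •
        ⁅Y i, C (seqCons ⁅Y (skip i q.1), Y (skip i q.2)⁆
          (Y ∘ (skip i ∘ skip₂ q.1 q.2)))⁆)
      + ∑ p ∈ pairs (n + 2), ∑ a ∈ range n, (-1 : ℤ) ^ (p.1 + p.2 + (a + 1)) •
          ⁅Y (skip₂ p.1 p.2 a),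
            C (seqCons ⁅Y p.1, Y p.2⁆ (Y ∘ (skip₂ p.1 p.2 ∘ skip a)))⁆
      = 0 := by
  rw [sum_pairs_sum_range_eq_sum_range_sum_pairs, ← sum_add_distrib]
  refine sum_eq_zero fun r _ => ?_
  rw [← sum_add_distrib]
  refine sum_eq_zero fun ⟨a, b⟩ h => ?_
  simp only [mem_pairs] at h
  rw [skip₂_unskip₂ (strictMono_skip r h.1) (skip_ne r a).symm (skip_ne r b).symm,
    skip₂_skip_comp_skip_unskip₂ h.1, neg_one_pow_skip_unskip₂ h.1, neg_smul, add_neg_cancel]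

theorem coboundary_coboundary (n : ℕ) (C : (ℕ → L) → V)
    (hadd : 0 < n → ∀ e e' Z, C (seqCons (e + e') Z) = C (seqCons e Z) + C (seqCons e' Z))
    (hswap : 1 < n → ∀ e e' Z, C (seqCons e (seqCons e' Z)) = -C (seqCons e' (seqCons e Z)))
    (Y : ℕ → L) :
    coboundary (n + 1) (coboundary n C) Y = 0 := by
  rw [coboundary, sum_lie_coboundary_comp_skip, sum_coboundary_seqCons_bracket,
    coboundary_sq_jacobi_terms n C hadd, coboundary_sq_swap_terms n C hswap,
    eq_neg_of_add_eq_zero_left (coboundary_sq_leibniz_terms n C Y),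
    eq_neg_of_add_eq_zero_left (coboundary_sq_mixed_terms n C Y)]
  abel

theorem coboundary_coboundary_of_alternating {n : ℕ} (c : (Fin n → L) → V)
    (hadd : ∀ (w : Fin n → L) (i : Fin n) (v₁ v₂ : L),
      c (Function.update w i (v₁ + v₂))
        = c (Function.update w i v₁) + c (Function.update w i v₂))
    (halt : ∀ (w : Fin n → L) (i j : Fin n), i ≠ j → w i = w j → c w = 0)
    (Y : ℕ → L) :
    coboundary (n + 1) (coboundary n fun Y => c fun k => Y k) Y = 0 :=
  coboundary_coboundary n _ (map_seqCons_add c hadd) (map_seqCons_swap c hadd halt) Y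

end LieModule


end LieCochain

open LieCochain

namespace LeftSymmetric

variable {K L M : Type*} [CommRing K] [AddCommGroup L] [Module K L] [AddCommGroup M] [Module K M]

abbrev subAdjacentLieRing (m : L →ₗ[K] L →ₗ[K] L)
    (hls : ∀ x y z : L, m (m x y) z - m x (m y z) = m (m y x) z - m y (m x z)) : LieRing L where
  bracket x y := m x y - m y x
  add_lie x y z := by
    show m (x + y) z - m z (x + y) = (m x z - m z x) + (m y z - m z y)
    simp only [map_add, LinearMap.add_apply]; abel
  lie_add x y z := by
    show m x (y + z) - m (y + z) x = (m x y - m y x) + (m x z - m z x)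
    simp only [map_add, LinearMap.add_apply]; abel
  lie_self x := sub_self _
  leibniz_lie x y z := by
    show m x (m y z - m z y) - m (m y z - m z y) x
      = (m (m x y - m y x) z - m z (m x y - m y x)) + (m y (m x z - m z x) - m (m x z - m z x) y)
    simp only [map_sub, LinearMap.sub_apply]
    linear_combination (norm := abel) -hls x y z - hls y z x - hls z x y

abbrev homLieRingModule (m : L →ₗ[K] L →ₗ[K] L) (ρ μ : L →ₗ[K] M →ₗ[K] M)
    (hls : ∀ x y z : L, m (m x y) z - m x (m y z) = m (m y x) z - m y (m x z))
    (hρrep : ∀ (x y : L) (v : M), ρ (m x y - m y x) v = ρ x (ρ y v) - ρ y (ρ x v))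
    (hcompat : ∀ (x y : L) (v : M),
      ρ x (μ y v) - μ y (ρ x v) = μ (m x y) v - μ y (μ x v)) :
    letI := subAdjacentLieRing m hls
    LieRingModule L (L →+ M) :=
  letI := subAdjacentLieRing m hls
  { bracket x f := (ρ x).toAddMonoidHom.comp f + (μ.flip (f x)).toAddMonoidHom
      - f.comp (m x).toAddMonoidHom
    add_lie x y f := by
      ext z
      show ρ (x + y) (f z) + μ z (f (x + y)) - f (m (x + y) z)
        = (ρ x (f z) + μ z (f x) - f (m x z)) + (ρ y (f z) + μ z (f y) - f (m y z))
      simp only [map_add, LinearMap.add_apply]; abel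
    lie_add x f g := by
      ext z
      show ρ x (f z + g z) + μ z (f x + g x) - (f (m x z) + g (m x z))
        = (ρ x (f z) + μ z (f x) - f (m x z)) + (ρ x (g z) + μ z (g x) - g (m x z))
      simp only [map_add]; abel
    leibniz_lie x y f := by
      ext z
      show ρ x (ρ y (f z) + μ z (f y) - f (m y z)) + μ z (ρ y (f x) + μ x (f y) - f (m y x))
          - (ρ y (f (m x z)) + μ (m x z) (f y) - f (m y (m x z)))
        = (ρ (m x y - m y x) (f z) + μ z (f (m x y - m y x)) - f (m (m x y - m y x) z))
          + (ρ y (ρ x (f z) + μ z (f x) - f (m x z)) + μ z (ρ x (f y) + μ y (f x) - f (m x y))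
            - (ρ x (f (m y z)) + μ (m y z) (f x) - f (m x (m y z))))
      have hf := congrArg f (hls x y z)
      have hr := hρrep x y (f z)
      simp only [map_sub, map_add, LinearMap.sub_apply] at hf hr ⊢
      linear_combination (norm := abel) -hr + hcompat x z (f y) - hcompat y z (f x) + hf }

end LeftSymmetric

lemma lsaCob_eq_coboundary {L M : Type*} [AddCommGroup L] [AddCommGroup M] [Bracket L L]
    [Bracket L (L →+ M)] {ρ μ : L → M → M} {m br : L → L → L}
    (hbr : ∀ x y : L, ⁅x, y⁆ = br x y)
    (hact : ∀ x z : L, ∀ f : L →+ M, ⁅x, f⁆ z = ρ x (f z) + μ z (f x) - f (m x z))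
    (k : ℕ) (c : (Fin k → L) → L →+ M) (y : Fin (k + 1) → L) (z : L) :
    lsaCob ρ μ m br k (fun w z => c w z) y z
      = coboundary k (fun Y => c (fun l => Y l)) (Function.extend Fin.val y 0) z := by
  set Y := Function.extend Fin.val y 0
  have hY : ∀ i : Fin (k + 1), Y i = y i := Fin.val_injective.extend_apply y 0
  have hskip : ∀ i : Fin (k + 1), (fun l : Fin k => (Y ∘ skip i) l) = y ∘ i.succAbove := by
    intro i; funext l; simp only [Function.comp, ← val_succAbove, hY]
  simp only [lsaCob, coboundary, AddMonoidHom.add_apply, AddMonoidHom.finsetSum_apply,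
    AddMonoidHom.smul_apply, hact, hbr, smul_add, smul_sub, sum_add_distrib, sum_sub_distrib,
    pairs, sum_filter, sum_product, sum_range, hY, hskip]
  congr 1
  refine sum_congr rfl fun i _ => sum_congr rfl fun j _ => ?_
  split_ifs with hij
  · rw [AddMonoidHom.smul_apply]
    congr 3
    funext ⟨l, hl⟩
    rcases l with _ | l
    · rfl
    · simp only [seqCons, Function.comp, ← hY, Nat.add_one_ne_zero, if_false]
      congr 1
      rw [Nat.mod_eq_of_lt (by split_ifs <;> omega)]
      unfold skip₂; split_ifs <;> omega
  · rfl

theorem lsaCob_sq_zero_general {K L M : Type*} [Field K]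
    [AddCommGroup L] [Module K L] [AddCommGroup M] [Module K M]
    (m : L →ₗ[K] L →ₗ[K] L) (ρ μ : L →ₗ[K] M →ₗ[K] M)
    (hls : ∀ x y z : L, m (m x y) z - m x (m y z) = m (m y x) z - m y (m x z))
    (hρrep : ∀ (x y : L) (v : M), ρ (m x y - m y x) v = ρ x (ρ y v) - ρ y (ρ x v))
    (hcompat : ∀ (x y : L) (v : M),
      ρ x (μ y v) - μ y (ρ x v) = μ (m x y) v - μ y (μ x v))
    (n : ℕ) (ω : (Fin n → L) → L → M)
    -- ω ∈ C^{n+1}(L, M) = Hom(Λⁿ L ⊗ L, M): alternating and multilinear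
    (halt : ∀ (y : Fin n → L) (z : L) (i j : Fin n),
      i ≠ j → y i = y j → ω y z = 0)
    (hadd1 : ∀ (y : Fin n → L) (i : Fin n) (v w : L) (z : L),
      ω (Function.update y i (v + w)) z
        = ω (Function.update y i v) z + ω (Function.update y i w) z)
    (hadd2 : ∀ (y : Fin n → L) (z₁ z₂ : L), ω y (z₁ + z₂) = ω y z₁ + ω y z₂) :
    ∀ (y : Fin (n + 2) → L) (z : L),
      lsaCob (fun x v => ρ x v) (fun x v => μ x v) (fun a b => m a b)
        (fun a b => m a b - m b a) (n + 1)
        (lsaCob (fun x v => ρ x v) (fun x v => μ x v) (fun a b => m a b)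
          (fun a b => m a b - m b a) n ω) y z = 0 := by
  intro y z
  let _ := LeftSymmetric.subAdjacentLieRing m hls
  let _ := LeftSymmetric.homLieRingModule m ρ μ hls hρrep hcompat
  have bridge := lsaCob_eq_coboundary (ρ := fun x v => ρ x v) (μ := fun x v => μ x v)
    (m := fun a b => m a b) (br := fun a b => m a b - m b a) (fun _ _ => rfl) (fun _ _ _ => rfl)
  set c : (Fin n → L) → L →+ M := fun w => AddMonoidHom.mk' (ω w) (hadd2 w)
  set C : (ℕ → L) → L →+ M := fun Y => c fun k => Y k
  have inner : lsaCob (fun x v => ρ x v) (fun x v => μ x v) (fun a b => m a b)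
      (fun a b => m a b - m b a) n ω = fun w z => coboundary n C (Function.extend Fin.val w 0) z :=
    funext₂ (bridge n c)
  have restrict : ∀ Y : ℕ → L,
      coboundary n C (Function.extend Fin.val (fun k : Fin (n + 1) => Y k) 0) = coboundary n C Y :=
    fun Y => coboundary_congr n (fun _ _ h => congrArg c (funext fun k => h k k.isLt))
      fun k hk => Fin.val_injective.extend_apply _ 0 ⟨k, hk⟩
  rw [inner]
  refine (bridge (n + 1) (fun w => coboundary n C (Function.extend Fin.val w 0)) y z).trans ?_
  rw [funext restrict, coboundary_coboundary_of_alternating c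
    (fun w i v₁ v₂ => AddMonoidHom.ext (hadd1 w i v₁ v₂))
    (fun w i j hij h => AddMonoidHom.ext fun z => halt w z i j hij h)]
  rfl

/-- for a left-symmetric algebra `(L, m)` with representation
`(M; ρ, μ)`, the coboundary operator `δ` on alternating multilinear cochains
satisfies `δ² = 0`. -/
theorem lsaCob_sq_zero {K L M : Type*} [Field K] [CharZero K]
    [AddCommGroup L] [Module K L] [AddCommGroup M] [Module K M]
    (m : L →ₗ[K] L →ₗ[K] L) (ρ μ : L →ₗ[K] M →ₗ[K] M)
    (hls : ∀ x y z : L, m (m x y) z - m x (m y z) = m (m y x) z - m y (m x z))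
    (hρrep : ∀ (x y : L) (v : M), ρ (m x y - m y x) v = ρ x (ρ y v) - ρ y (ρ x v))
    (hcompat : ∀ (x y : L) (v : M),
      ρ x (μ y v) - μ y (ρ x v) = μ (m x y) v - μ y (μ x v))
    (n : ℕ) (ω : (Fin n → L) → L → M)
    -- ω ∈ C^{n+1}(L, M) = Hom(Λⁿ L ⊗ L, M): alternating and multilinear
    (halt : ∀ (y : Fin n → L) (z : L) (i j : Fin n),
      i ≠ j → y i = y j → ω y z = 0)
    (hadd1 : ∀ (y : Fin n → L) (i : Fin n) (v w : L) (z : L),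
      ω (Function.update y i (v + w)) z
        = ω (Function.update y i v) z + ω (Function.update y i w) z)
    (hsmul1 : ∀ (y : Fin n → L) (i : Fin n) (c : K) (v : L) (z : L),
      ω (Function.update y i (c • v)) z = c • ω (Function.update y i v) z)
    (hadd2 : ∀ (y : Fin n → L) (z₁ z₂ : L), ω y (z₁ + z₂) = ω y z₁ + ω y z₂)
    (hsmul2 : ∀ (y : Fin n → L) (c : K) (z : L), ω y (c • z) = c • ω y z) :
    ∀ (y : Fin (n + 2) → L) (z : L),
      lsaCob (fun x v => ρ x v) (fun x v => μ x v) (fun a b => m a b)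
        (fun a b => m a b - m b a) (n + 1)
        (lsaCob (fun x v => ρ x v) (fun x v => μ x v) (fun a b => m a b)
          (fun a b => m a b - m b a) n ω) y z = 0 :=
  lsaCob_sq_zero_general m ρ μ hls hρrep hcompat n ω halt hadd1 hadd2
end

section
/- Let (L,A,·,ℓ) be a left-symmetric Rinehart algebra with representation (M;ρ,μ), and let ω ∈ Cⁿ(L,M) be an A-multilinear n-cochain (ω(x₁,…,axᵢ,…,xₙ) = aω(x₁,…,xₙ)). Then δω is also A-multilinear in each argument, where δ is the left-symmetric algebra coboundary operator. -/
open Function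

theorem Fin.val_succAbove {n : ℕ} (p : Fin (n + 1)) (i : Fin n) :
    (p.succAbove i : ℕ) = if (i : ℕ) < p then (i : ℕ) else (i : ℕ) + 1 := by
  rw [Fin.succAbove]
  split_ifs <;> simp_all [Fin.lt_def]

theorem Fin.update_comp_succAbove_self {α : Type*} {n : ℕ} (y : Fin (n + 1) → α)
    (p : Fin (n + 1)) (v : α) :
    update y p v ∘ p.succAbove = y ∘ p.succAbove :=
  update_comp_eq_of_notMem_range _ _ (by simp)

theorem sum_sum_ite_lt_ite_eq {ι M : Type*} [Fintype ι] [LinearOrder ι] [AddCommMonoid M]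
    (c : ι → M) (p : ι) :
    ∑ i, ∑ j, (if i < j then (if i = p then c j else if j = p then c i else 0) else 0)
      = ∑ k, if k = p then 0 else c k := by
  have hrow : ∀ i, ∑ j, (if i < j then (if i = p then c j else if j = p then c i else 0) else 0)
      = (if i = p then ∑ j, (if p < j then c j else 0) else 0) + (if i < p then c i else 0) := by
    intro i
    rcases eq_or_ne i p with rfl | hip
    · simp
    · rw [Finset.sum_eq_single p (fun j _ hj => by simp [hip, hj]) (by simp)]
      simp [hip]
  simp only [hrow, Finset.sum_add_distrib, Finset.sum_ite_eq', Finset.mem_univ, if_true]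
  rw [← Finset.sum_add_distrib]
  refine Finset.sum_congr rfl fun k _ => ?_
  rcases lt_trichotomy k p with hkp | rfl | hpk
  · simp [hkp, hkp.ne, not_lt_of_gt hkp]
  · simp
  · simp [hpk, hpk.ne', not_lt_of_gt hpk]

section BracketArgs

variable {α : Type*} {n : ℕ}

/-- For `i < j`, the tuple `(b, y₀, …, ŷᵢ, …, ŷⱼ, …, yₙ)` to which `lsaCob` applies `ω` in its
bracket term, there with `b = br (y i) (y j)`. -/
abbrev lsaCobBracketArgs (b : α) (y : Fin (n + 1) → α) (i j : Fin (n + 1)) : Fin n → α :=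
  fun k : Fin n =>
    if (k : ℕ) = 0 then b
    else
      y ⟨(if (k : ℕ) - 1 < (i : ℕ) then (k : ℕ) - 1
          else if (k : ℕ) < (j : ℕ) then (k : ℕ)
          else (k : ℕ) + 1) % (n + 1),
         Nat.mod_lt _ (Nat.succ_pos n)⟩

theorem lsaCobBracketArgs_eq_cons_removeNth_castPred {m : ℕ} (b : α)
    (y : Fin (m + 1 + 1) → α) {i j : Fin (m + 1 + 1)} (hij : i < j) :
    lsaCobBracketArgs b y i j
      = Fin.cons b (Fin.removeNth (i.castPred (Fin.ne_last_of_lt hij)) (y ∘ j.succAbove)) := by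
  ext k
  cases k using Fin.cases with
  | zero => simp
  | succ k =>
    simp only [lsaCobBracketArgs, Fin.val_succ, Fin.cons_succ, Fin.removeNth_apply, comp_apply]
    refine congrArg y (Fin.ext ?_)
    simp only [Fin.val_succAbove]
    rw [Fin.coe_castPred, Nat.add_sub_cancel, Nat.mod_eq_of_lt (by split_ifs <;> omega)]
    split_ifs <;> omega

theorem lsaCobBracketArgs_eq_cons_removeNth_pred {m : ℕ} (b : α)
    (y : Fin (m + 1 + 1) → α) {i j : Fin (m + 1 + 1)} (hij : i < j) :
    lsaCobBracketArgs b y i j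
      = Fin.cons b (Fin.removeNth (j.pred (Fin.ne_zero_of_lt hij)) (y ∘ i.succAbove)) := by
  ext k
  cases k using Fin.cases with
  | zero => simp
  | succ k =>
    simp only [lsaCobBracketArgs, Fin.val_succ, Fin.cons_succ, Fin.removeNth_apply, comp_apply]
    refine congrArg y (Fin.ext ?_)
    simp only [Fin.val_succAbove]
    rw [Fin.val_pred, Nat.add_sub_cancel, Nat.mod_eq_of_lt (by split_ifs <;> omega)]
    split_ifs <;> omega

end BracketArgs

section AlternatingMap

variable {A L M : Type*} [CommRing A] [AddCommGroup L] [Module A L] [AddCommGroup M] [Module A M]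
  {n : ℕ} (g : L [⋀^Fin n]→ₗ[A] M)

theorem AlternatingMap.map_update_smul_comp_succAbove (y : Fin (n + 1) → L)
    {k p : Fin (n + 1)} (hkp : k ≠ p) (a : A) :
    g (update y p (a • y p) ∘ k.succAbove) = a • g (y ∘ k.succAbove) := by
  obtain ⟨s, rfl⟩ := Fin.exists_succAbove_eq hkp.symm
  rw [update_comp_eq_of_injective _ Fin.succAbove_right_injective, g.map_update_smul,
    ← comp_apply (f := y), update_eq_self]

theorem neg_one_pow_add_smul_map_lsaCobBracketArgs_castPred (b : L) (y : Fin (n + 1) → L)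
    {i j : Fin (n + 1)} (hij : i < j) :
    (-1 : ℤ) ^ ((i : ℕ) + (j : ℕ)) • g (lsaCobBracketArgs b y i j)
      = (-1 : ℤ) ^ (j : ℕ) •
          g (update (y ∘ j.succAbove) (i.castPred (Fin.ne_last_of_lt hij)) b) := by
  obtain ⟨m, rfl⟩ : ∃ m, n = m + 1 := ⟨n - 1, by omega⟩
  rw [lsaCobBracketArgs_eq_cons_removeNth_castPred b y hij, ← Fin.insertNth_removeNth,
    g.map_insertNth, smul_smul, ← pow_add, Fin.coe_castPred, add_comm]
  rfl

theorem neg_one_pow_add_smul_map_lsaCobBracketArgs_pred (b : L) (y : Fin (n + 1) → L)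
    {i j : Fin (n + 1)} (hij : i < j) :
    (-1 : ℤ) ^ ((i : ℕ) + (j : ℕ)) • g (lsaCobBracketArgs b y i j)
      = -((-1 : ℤ) ^ (i : ℕ) •
          g (update (y ∘ i.succAbove) (j.pred (Fin.ne_zero_of_lt hij)) b)) := by
  obtain ⟨m, rfl⟩ : ∃ m, n = m + 1 := ⟨n - 1, by omega⟩
  have hj : (j : ℕ) = (j.pred (Fin.ne_zero_of_lt hij) : ℕ) + 1 := by
    rw [Fin.val_pred]
    omega
  rw [lsaCobBracketArgs_eq_cons_removeNth_pred b y hij, ← Fin.insertNth_removeNth,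
    g.map_insertNth, smul_smul, ← pow_add, hj, ← add_assoc, pow_succ, mul_neg_one, neg_smul]
  rfl

theorem neg_one_pow_add_smul_map_lsaCobBracketArgs_update_smul
    (br : L → L → L) (ℓ : L → A → A)
    (hbr_smul_left : ∀ (a : A) (x y : L), br (a • x) y = a • br x y - ℓ y a • x)
    (hbr_smul_right : ∀ (x : L) (a : A) (y : L), br x (a • y) = a • br x y + ℓ x a • y)
    (y : Fin (n + 1) → L) (p : Fin (n + 1)) (a : A) {i j : Fin (n + 1)} (hij : i < j) :
    (-1 : ℤ) ^ ((i : ℕ) + (j : ℕ)) • g (lsaCobBracketArgs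
        (br (update y p (a • y p) i) (update y p (a • y p) j)) (update y p (a • y p)) i j)
      = a • ((-1 : ℤ) ^ ((i : ℕ) + (j : ℕ)) • g (lsaCobBracketArgs (br (y i) (y j)) y i j))
        - if i = p then (-1 : ℤ) ^ (j : ℕ) • ℓ (y j) a • g (y ∘ j.succAbove)
          else if j = p then (-1 : ℤ) ^ (i : ℕ) • ℓ (y i) a • g (y ∘ i.succAbove) else 0 := by
  rcases eq_or_ne i p with rfl | hip
  · set i' := i.castPred (Fin.ne_last_of_lt hij)
    have hi' : j.succAbove i' = i := Fin.succAbove_castPred_of_lt _ _ hij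
    have hcomp : update y i (a • y i) ∘ j.succAbove = update (y ∘ j.succAbove) i' (a • y i) := by
      conv_lhs => rw [← hi']
      rw [update_comp_eq_of_injective _ Fin.succAbove_right_injective, hi']
    have hyi : y i = (y ∘ j.succAbove) i' := by rw [comp_apply, hi']
    rw [neg_one_pow_add_smul_map_lsaCobBracketArgs_castPred _ _ _ hij,
      neg_one_pow_add_smul_map_lsaCobBracketArgs_castPred _ _ _ hij, update_self,
      update_of_ne hij.ne', hcomp, update_idem, hbr_smul_left, g.map_update_sub,
      g.map_update_smul, g.map_update_smul, if_pos rfl, hyi, update_eq_self, smul_sub, smul_comm a]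
  rcases eq_or_ne j p with rfl | hjp
  · set j' := j.pred (Fin.ne_zero_of_lt hij)
    have hj' : i.succAbove j' = j := Fin.succAbove_pred_of_lt _ _ hij
    have hcomp : update y j (a • y j) ∘ i.succAbove = update (y ∘ i.succAbove) j' (a • y j) := by
      conv_lhs => rw [← hj']
      rw [update_comp_eq_of_injective _ Fin.succAbove_right_injective, hj']
    have hyj : y j = (y ∘ i.succAbove) j' := by rw [comp_apply, hj']
    rw [neg_one_pow_add_smul_map_lsaCobBracketArgs_pred _ _ _ hij,
      neg_one_pow_add_smul_map_lsaCobBracketArgs_pred _ _ _ hij, update_self,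
      update_of_ne hij.ne, hcomp, update_idem, hbr_smul_right, g.map_update_add,
      g.map_update_smul, g.map_update_smul, if_neg hij.ne, if_pos rfl, hyj, update_eq_self,
      smul_add, smul_neg, smul_comm a, neg_add, sub_eq_add_neg]
  · rw [neg_one_pow_add_smul_map_lsaCobBracketArgs_castPred _ _ _ hij,
      neg_one_pow_add_smul_map_lsaCobBracketArgs_castPred _ _ _ hij, update_of_ne hip,
      update_of_ne hjp, if_neg hip, if_neg hjp, sub_zero]
    obtain ⟨s, rfl⟩ := Fin.exists_succAbove_eq hjp.symm
    have hsi : s ≠ i.castPred (Fin.ne_last_of_lt hij) := by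
      rintro rfl
      exact hip (Fin.succAbove_castPred_of_lt _ _ hij).symm
    rw [update_comp_eq_of_injective _ Fin.succAbove_right_injective, update_comm hsi,
      g.map_update_smul, ← update_comm hsi, ← comp_apply (f := y), update_eq_self, smul_comm]

end AlternatingMap

section Cochain

variable {A L M : Type*} [CommRing A] [AddCommGroup L] [Module A L] [AddCommGroup M] [Module A M]
  {n : ℕ}

def cochainLinearMap (ω : (Fin n → L) → L → M)
    (halt : ∀ (y : Fin n → L) (z : L) (i j : Fin n), i ≠ j → y i = y j → ω y z = 0)
    (hadd1 : ∀ (y : Fin n → L) (i : Fin n) (v w : L) (z : L),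
      ω (update y i (v + w)) z = ω (update y i v) z + ω (update y i w) z)
    (hadd2 : ∀ (y : Fin n → L) (z₁ z₂ : L), ω y (z₁ + z₂) = ω y z₁ + ω y z₂)
    (hA1 : ∀ (y : Fin n → L) (z : L) (i : Fin n) (a : A),
      ω (update y i (a • y i)) z = a • ω y z)
    (hA2 : ∀ (y : Fin n → L) (z : L) (a : A), ω y (a • z) = a • ω y z) :
    L →ₗ[A] L [⋀^Fin n]→ₗ[A] M where
  toFun z :=
    { toFun y := ω y z
      map_update_add' y i v w := by convert hadd1 y i v w z
      map_update_smul' y i a v := by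
        obtain rfl : ‹DecidableEq (Fin n)› = instDecidableEqFin n := Subsingleton.elim _ _
        simpa using hA1 (update y i v) z i a
      map_eq_zero_of_eq' y i j hy hij := halt y z i j hij hy }
  map_add' z₁ z₂ := by ext y; exact hadd2 y z₁ z₂
  map_smul' a z := by ext y; exact hA2 y z a

variable (ρ μ : L → M → M) (m br : L → L → L) (ℓ : L → A → A) (f : L →ₗ[A] L [⋀^Fin n]→ₗ[A] M)

theorem lsaCob_update_smul
    (hbr_smul_left : ∀ (a : A) (x y : L), br (a • x) y = a • br x y - ℓ y a • x)
    (hbr_smul_right : ∀ (x : L) (a : A) (y : L), br x (a • y) = a • br x y + ℓ x a • y)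
    (hm_smul_left : ∀ (a : A) (x y : L), m (a • x) y = a • m x y)
    (hρ_smul_left : ∀ (a : A) (x : L) (v : M), ρ (a • x) v = a • ρ x v)
    (hρ_smul_right : ∀ (x : L) (a : A) (v : M), ρ x (a • v) = a • ρ x v + ℓ x a • v)
    (hμ_smul_right : ∀ (x : L) (a : A) (v : M), μ x (a • v) = a • μ x v)
    (y : Fin (n + 1) → L) (z : L) (p : Fin (n + 1)) (a : A) :
    lsaCob ρ μ m br n (fun y z => f z y) (update y p (a • y p)) z
      = a • lsaCob ρ μ m br n (fun y z => f z y) y z := by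
  set anchor : Fin (n + 1) → M := fun k => (-1 : ℤ) ^ (k : ℕ) • ℓ (y k) a • f z (y ∘ k.succAbove)
  have hbracket : (∑ i : Fin (n + 1), ∑ j : Fin (n + 1), if (i : ℕ) < (j : ℕ) then
        (-1 : ℤ) ^ ((i : ℕ) + (j : ℕ)) • f z (lsaCobBracketArgs
          (br (update y p (a • y p) i) (update y p (a • y p) j)) (update y p (a • y p)) i j)
        else 0)
      = a • (∑ i : Fin (n + 1), ∑ j : Fin (n + 1), if (i : ℕ) < (j : ℕ) then
        (-1 : ℤ) ^ ((i : ℕ) + (j : ℕ)) • f z (lsaCobBracketArgs (br (y i) (y j)) y i j) else 0)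
        - ∑ k, if k = p then 0 else anchor k := by
    rw [← sum_sum_ite_lt_ite_eq anchor p, Finset.smul_sum, ← Finset.sum_sub_distrib]
    refine Finset.sum_congr rfl fun i _ => ?_
    rw [Finset.smul_sum, ← Finset.sum_sub_distrib]
    refine Finset.sum_congr rfl fun j _ => ?_
    simp only [← Fin.lt_def]
    by_cases hij : i < j
    · simp only [if_pos hij]
      exact neg_one_pow_add_smul_map_lsaCobBracketArgs_update_smul _ br ℓ hbr_smul_left
        hbr_smul_right y p a hij
    · simp only [if_neg hij, smul_zero, sub_zero]
  have hρ : ∀ k : Fin (n + 1),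
      (-1 : ℤ) ^ (k : ℕ) • ρ (update y p (a • y p) k) (f z (update y p (a • y p) ∘ k.succAbove))
        = a • ((-1 : ℤ) ^ (k : ℕ) • ρ (y k) (f z (y ∘ k.succAbove)))
          + if k = p then 0 else anchor k := by
    intro k
    rcases eq_or_ne k p with rfl | hkp
    · rw [update_self, Fin.update_comp_succAbove_self, hρ_smul_left, if_pos rfl, add_zero,
        smul_comm]
    · rw [update_of_ne hkp, (f z).map_update_smul_comp_succAbove y hkp, hρ_smul_right, if_neg hkp,
        smul_add, smul_comm a]
  have hμ : ∀ k : Fin (n + 1),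
      (-1 : ℤ) ^ (k : ℕ) • μ z (f (update y p (a • y p) k) (update y p (a • y p) ∘ k.succAbove))
        = a • ((-1 : ℤ) ^ (k : ℕ) • μ z (f (y k) (y ∘ k.succAbove))) := by
    intro k
    rcases eq_or_ne k p with rfl | hkp
    · rw [update_self, Fin.update_comp_succAbove_self, map_smul, AlternatingMap.smul_apply,
        hμ_smul_right, smul_comm]
    · rw [update_of_ne hkp, (f (y k)).map_update_smul_comp_succAbove y hkp, hμ_smul_right,
        smul_comm]
  have hm : ∀ k : Fin (n + 1),
      (-1 : ℤ) ^ (k : ℕ) • f (m (update y p (a • y p) k) z) (update y p (a • y p) ∘ k.succAbove)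
        = a • ((-1 : ℤ) ^ (k : ℕ) • f (m (y k) z) (y ∘ k.succAbove)) := by
    intro k
    rcases eq_or_ne k p with rfl | hkp
    · rw [update_self, Fin.update_comp_succAbove_self, hm_smul_left, map_smul,
        AlternatingMap.smul_apply, smul_comm]
    · rw [update_of_ne hkp, (f (m (y k) z)).map_update_smul_comp_succAbove y hkp, smul_comm]
  simp only [lsaCob, hρ, hμ, hm, Finset.sum_add_distrib, ← Finset.smul_sum]
  rw [hbracket, smul_add, smul_sub, smul_add]
  abel

theorem lsaCob_smul_right
    (hm_smul_right : ∀ (x : L) (a : A) (y : L), m x (a • y) = ℓ x a • y + a • m x y)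
    (hρ_smul_right : ∀ (x : L) (a : A) (v : M), ρ x (a • v) = a • ρ x v + ℓ x a • v)
    (hμ_smul_left : ∀ (a : A) (x : L) (v : M), μ (a • x) v = a • μ x v)
    (y : Fin (n + 1) → L) (z : L) (a : A) :
    lsaCob ρ μ m br n (fun y z => f z y) y (a • z)
      = a • lsaCob ρ μ m br n (fun y z => f z y) y z := by
  set anchor : Fin (n + 1) → M := fun k => (-1 : ℤ) ^ (k : ℕ) • ℓ (y k) a • f z (y ∘ k.succAbove)
  have hρ : ∀ k : Fin (n + 1), (-1 : ℤ) ^ (k : ℕ) • ρ (y k) (f (a • z) (y ∘ k.succAbove))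
      = a • ((-1 : ℤ) ^ (k : ℕ) • ρ (y k) (f z (y ∘ k.succAbove))) + anchor k := fun k => by
    rw [map_smul, AlternatingMap.smul_apply, hρ_smul_right, smul_add, smul_comm a]
  have hm : ∀ k : Fin (n + 1), (-1 : ℤ) ^ (k : ℕ) • f (m (y k) (a • z)) (y ∘ k.succAbove)
      = a • ((-1 : ℤ) ^ (k : ℕ) • f (m (y k) z) (y ∘ k.succAbove)) + anchor k := fun k => by
    rw [hm_smul_right, map_add, map_smul, map_smul, AlternatingMap.add_apply,
      AlternatingMap.smul_apply, AlternatingMap.smul_apply, smul_add, smul_comm a, add_comm]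
  simp only [lsaCob, hρ, hm]
  simp only [hμ_smul_left, map_smul, AlternatingMap.smul_apply, smul_comm _ a, ← smul_ite_zero,
    Finset.sum_add_distrib, ← Finset.smul_sum]
  rw [smul_add, smul_sub, smul_add]
  abel

end Cochain

theorem lsaCob_A_multilinear_general {K A L M : Type*} [Field K]
    [CommRing A] [Algebra K A]
    [AddCommGroup L] [Module K L] [Module A L]
    [AddCommGroup M] [Module K M] [Module A M]
    (m : L →ₗ[K] L →ₗ[K] L) (ℓ : L →ₗ[K] A →ₗ[K] A)
    (ρ μ : L →ₗ[K] M →ₗ[K] M)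
    -- left-symmetric Rinehart axioms for (L, A, m, ℓ)
    (hc1 : ∀ (x : L) (a : A) (y : L), m x (a • y) = ℓ x a • y + a • m x y)
    (hc2 : ∀ (a : A) (x y : L), m (a • x) y = a • m x y)
    -- (M; ρ, μ) is a representation
    (hρ1 : ∀ (a : A) (x : L) (v : M), ρ (a • x) v = a • ρ x v)
    (hρ2 : ∀ (x : L) (a : A) (v : M), ρ x (a • v) = a • ρ x v + ℓ x a • v)
    (hμ1 : ∀ (a : A) (x : L) (v : M), μ (a • x) v = a • μ x v)
    (hμ2 : ∀ (x : L) (a : A) (v : M), μ x (a • v) = a • μ x v)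
    (n : ℕ) (ω : (Fin n → L) → L → M)
    -- ω is an n+1 cochain: alternating, multilinear, and A-multilinear
    (halt : ∀ (y : Fin n → L) (z : L) (i j : Fin n),
      i ≠ j → y i = y j → ω y z = 0)
    (hadd1 : ∀ (y : Fin n → L) (i : Fin n) (v w : L) (z : L),
      ω (Function.update y i (v + w)) z
        = ω (Function.update y i v) z + ω (Function.update y i w) z)
    (hadd2 : ∀ (y : Fin n → L) (z₁ z₂ : L), ω y (z₁ + z₂) = ω y z₁ + ω y z₂)
    (hA1 : ∀ (y : Fin n → L) (z : L) (i : Fin n) (a : A),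
      ω (Function.update y i (a • y i)) z = a • ω y z)
    (hA2 : ∀ (y : Fin n → L) (z : L) (a : A), ω y (a • z) = a • ω y z) :
    -- δω is A-linear in each of the first n+1 arguments and in the last one
    (∀ (y : Fin (n + 1) → L) (z : L) (i : Fin (n + 1)) (a : A),
      lsaCob (fun x v => ρ x v) (fun x v => μ x v) (fun p q => m p q)
          (fun p q => m p q - m q p) n ω (Function.update y i (a • y i)) z
        = a • lsaCob (fun x v => ρ x v) (fun x v => μ x v) (fun p q => m p q)
            (fun p q => m p q - m q p) n ω y z) ∧
    (∀ (y : Fin (n + 1) → L) (z : L) (a : A),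
      lsaCob (fun x v => ρ x v) (fun x v => μ x v) (fun p q => m p q)
          (fun p q => m p q - m q p) n ω y (a • z)
        = a • lsaCob (fun x v => ρ x v) (fun x v => μ x v) (fun p q => m p q)
            (fun p q => m p q - m q p) n ω y z) := by
  let f := cochainLinearMap ω halt hadd1 hadd2 hA1 hA2
  have hbr_smul_left : ∀ (a : A) (x y : L),
      m (a • x) y - m y (a • x) = a • (m x y - m y x) - ℓ y a • x := by
    intro a x y
    rw [hc2, hc1, smul_sub]
    abel
  have hbr_smul_right : ∀ (x : L) (a : A) (y : L),
      m x (a • y) - m (a • y) x = a • (m x y - m y x) + ℓ x a • y := by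
    intro x a y
    rw [hc1, hc2, smul_sub]
    abel
  exact ⟨lsaCob_update_smul (fun x v => ρ x v) (fun x v => μ x v) (fun p q => m p q)
      (fun p q => m p q - m q p) (fun x b => ℓ x b) f hbr_smul_left hbr_smul_right hc2 hρ1 hρ2 hμ2,
    lsaCob_smul_right (fun x v => ρ x v) (fun x v => μ x v) (fun p q => m p q)
      (fun p q => m p q - m q p) (fun x b => ℓ x b) f hc1 hρ2 hμ1⟩

/-- for a left-symmetric Rinehart algebra `(L, A, m, ℓ)` with
representation `(M; ρ, μ)` and an `A`-multilinear (alternating, multilinear)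
cochain `ω`, the coboundary `δω` is again `A`-multilinear in each argument. -/
theorem lsaCob_A_multilinear {K A L M : Type*} [Field K] [CharZero K]
    [CommRing A] [Algebra K A]
    [AddCommGroup L] [Module K L] [Module A L] [IsScalarTower K A L]
    [AddCommGroup M] [Module K M] [Module A M] [IsScalarTower K A M]
    (m : L →ₗ[K] L →ₗ[K] L) (ℓ : L →ₗ[K] A →ₗ[K] A)
    (ρ μ : L →ₗ[K] M →ₗ[K] M)
    -- left-symmetric Rinehart axioms for (L, A, m, ℓ)
    (hls : ∀ x y z : L, m (m x y) z - m x (m y z) = m (m y x) z - m y (m x z))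
    (hder : ∀ (x : L) (a b : A), ℓ x (a * b) = a * ℓ x b + ℓ x a * b)
    (hrep : ∀ (x y : L) (a : A), ℓ (m x y - m y x) a = ℓ x (ℓ y a) - ℓ y (ℓ x a))
    (hlA : ∀ (a : A) (x : L) (b : A), ℓ (a • x) b = a * ℓ x b)
    (hc1 : ∀ (x : L) (a : A) (y : L), m x (a • y) = ℓ x a • y + a • m x y)
    (hc2 : ∀ (a : A) (x y : L), m (a • x) y = a • m x y)
    -- (M; ρ, μ) is a representation
    (hρrep : ∀ (x y : L) (v : M), ρ (m x y - m y x) v = ρ x (ρ y v) - ρ y (ρ x v))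
    (hρ1 : ∀ (a : A) (x : L) (v : M), ρ (a • x) v = a • ρ x v)
    (hρ2 : ∀ (x : L) (a : A) (v : M), ρ x (a • v) = a • ρ x v + ℓ x a • v)
    (hμ1 : ∀ (a : A) (x : L) (v : M), μ (a • x) v = a • μ x v)
    (hμ2 : ∀ (x : L) (a : A) (v : M), μ x (a • v) = a • μ x v)
    (hcompat : ∀ (x y : L) (v : M),
      ρ x (μ y v) - μ y (ρ x v) = μ (m x y) v - μ y (μ x v))
    (n : ℕ) (ω : (Fin n → L) → L → M)
    -- ω is an n+1 cochain: alternating, multilinear, and A-multilinear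
    (halt : ∀ (y : Fin n → L) (z : L) (i j : Fin n),
      i ≠ j → y i = y j → ω y z = 0)
    (hadd1 : ∀ (y : Fin n → L) (i : Fin n) (v w : L) (z : L),
      ω (Function.update y i (v + w)) z
        = ω (Function.update y i v) z + ω (Function.update y i w) z)
    (hadd2 : ∀ (y : Fin n → L) (z₁ z₂ : L), ω y (z₁ + z₂) = ω y z₁ + ω y z₂)
    (hA1 : ∀ (y : Fin n → L) (z : L) (i : Fin n) (a : A),
      ω (Function.update y i (a • y i)) z = a • ω y z)
    (hA2 : ∀ (y : Fin n → L) (z : L) (a : A), ω y (a • z) = a • ω y z) :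
    -- δω is A-linear in each of the first n+1 arguments and in the last one
    (∀ (y : Fin (n + 1) → L) (z : L) (i : Fin (n + 1)) (a : A),
      lsaCob (fun x v => ρ x v) (fun x v => μ x v) (fun p q => m p q)
          (fun p q => m p q - m q p) n ω (Function.update y i (a • y i)) z
        = a • lsaCob (fun x v => ρ x v) (fun x v => μ x v) (fun p q => m p q)
            (fun p q => m p q - m q p) n ω y z) ∧
    (∀ (y : Fin (n + 1) → L) (z : L) (a : A),
      lsaCob (fun x v => ρ x v) (fun x v => μ x v) (fun p q => m p q)
          (fun p q => m p q - m q p) n ω y (a • z)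
        = a • lsaCob (fun x v => ρ x v) (fun x v => μ x v) (fun p q => m p q)
            (fun p q => m p q - m q p) n ω y z) :=
  lsaCob_A_multilinear_general m ℓ ρ μ hc1 hc2 hρ1 hρ2 hμ1 hμ2 n ω halt hadd1 hadd2 hA1 hA2
end

section
/- Let N be a Nijenhuis operator on a left-symmetric algebra (L,·). Then for all natural numbers j,k ≥ 1 and all x,y ∈ L: Nʲ(x)·Nᵏ(y) − Nᵏ(Nʲ(x)·y) − Nʲ(x·Nᵏ(y)) + N^{j+k}(x·y) = 0. Consequently any polynomial P(N) = Σᵢ cᵢNⁱ with scalar coefficients is again a Nijenhuis operator. -/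
/-!
Write `T(A, B)(x, y) = A x · B y − B (A x · y) − A (x · B y) + A B (x · y)`, which is bilinear
in the operators `A, B`; `N` is Nijenhuis iff `T(N, N) = 0`. Directly from the definition,
`T(A C, B)(x, y) = T(A, B)(C x, y) + A T(C, B)(x, y)`, and, when `A` and `B` commute,
`T(A, B C)(x, y) = T(A, B)(x, C y) + B T(A, C)(x, y)`. Peeling off one factor of `N` at a time
gives `T(Nʲ, Nᵏ) = 0` for all `j, k`, and bilinearity then gives `T(P(N), P(N)) = 0`.
-/

open Finset

section

variable {K L : Type*} [CommRing K] [AddCommGroup L] [Module K L]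

def mixedNijenhuisTorsion (m : L →ₗ[K] L →ₗ[K] L) (x y : L) :
    Module.End K L →ₗ[K] Module.End K L →ₗ[K] L :=
  LinearMap.mk₂ K (fun A B => m (A x) (B y) - B (m (A x) y) - A (m x (B y)) + A (B (m x y)))
    (fun _ _ _ => by simp only [LinearMap.add_apply, map_add]; abel)
    (fun _ _ _ => by simp only [LinearMap.smul_apply, map_smul]; module)
    (fun _ _ _ => by simp only [LinearMap.add_apply, map_add]; abel)
    (fun _ _ _ => by simp only [LinearMap.smul_apply, map_smul]; module)

namespace mixedNijenhuisTorsion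

variable (m : L →ₗ[K] L →ₗ[K] L)

theorem apply (x y : L) (A B : Module.End K L) :
    mixedNijenhuisTorsion m x y A B
      = m (A x) (B y) - B (m (A x) y) - A (m x (B y)) + A (B (m x y)) :=
  rfl

theorem one_left (x y : L) (B : Module.End K L) : mixedNijenhuisTorsion m x y 1 B = 0 := by
  simp only [apply, Module.End.one_apply]; abel

theorem one_right (x y : L) (A : Module.End K L) : mixedNijenhuisTorsion m x y A 1 = 0 := by
  simp only [apply, Module.End.one_apply]; abel

theorem mul_left (x y : L) (A B C : Module.End K L) :
    mixedNijenhuisTorsion m x y (A * C) B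
      = mixedNijenhuisTorsion m (C x) y A B + A (mixedNijenhuisTorsion m x y C B) := by
  simp only [apply, Module.End.mul_apply, map_add, map_sub]; abel

theorem mul_right (x y : L) {A B : Module.End K L} (hAB : Commute A B) (C : Module.End K L) :
    mixedNijenhuisTorsion m x y A (B * C)
      = mixedNijenhuisTorsion m x (C y) A B + B (mixedNijenhuisTorsion m x y A C) := by
  have hBA : ∀ z, B (A z) = A (B z) := fun z => LinearMap.congr_fun hAB.symm.eq z
  simp only [apply, Module.End.mul_apply, map_add, map_sub, hBA]; abel

variable {m} {N : Module.End K L}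

theorem pow_pow_eq_zero (hN : ∀ x y, mixedNijenhuisTorsion m x y N N = 0) (j k : ℕ) (x y : L) :
    mixedNijenhuisTorsion m x y (N ^ j) (N ^ k) = 0 := by
  have pow_right_of_base : ∀ k x y, mixedNijenhuisTorsion m x y N (N ^ k) = 0 := by
    intro k
    induction k with
    | zero => exact fun x y => one_right m x y N
    | succ k ih =>
      intro x y
      rw [pow_succ', mul_right m x y (Commute.refl N), hN, ih, map_zero, add_zero]
  induction j generalizing x with
  | zero => rw [pow_zero, one_left]
  | succ j ih => rw [pow_succ, mul_left, ih, pow_right_of_base, map_zero, add_zero]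

theorem sum_smul_pow_eq_zero (hN : ∀ x y, mixedNijenhuisTorsion m x y N N = 0) (s : Finset ℕ)
    (c : ℕ → K) (x y : L) :
    mixedNijenhuisTorsion m x y (∑ i ∈ s, c i • N ^ i) (∑ i ∈ s, c i • N ^ i) = 0 := by
  simp only [map_sum, map_smul, LinearMap.sum_apply, LinearMap.smul_apply,
    pow_pow_eq_zero hN, smul_zero, sum_const_zero]

end mixedNijenhuisTorsion

end

theorem nijenhuis_powers_and_polynomials_general {K L : Type*} [Field K]
    [AddCommGroup L] [Module K L]
    (m : L →ₗ[K] L →ₗ[K] L) (N : L →ₗ[K] L)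
    (hN : ∀ x y : L,
      m (N x) (N y) - N (m x (N y)) - N (m (N x) y) + N (N (m x y)) = 0) :
    (∀ (j k : ℕ), 1 ≤ j → 1 ≤ k → ∀ x y : L,
      m ((N ^ j) x) ((N ^ k) y) - (N ^ k) (m ((N ^ j) x) y)
        - (N ^ j) (m x ((N ^ k) y)) + (N ^ (j + k)) (m x y) = 0) ∧
    (∀ (d : ℕ) (c : ℕ → K),
      let P : L →ₗ[K] L := ∑ i ∈ Finset.range (d + 1), c i • N ^ i
      ∀ x y : L,
        m (P x) (P y) - P (m x (P y)) - P (m (P x) y) + P (P (m x y)) = 0) := by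
  have hT : ∀ x y, mixedNijenhuisTorsion m x y N N = 0 := fun x y => by
    rw [mixedNijenhuisTorsion.apply, sub_right_comm]; exact hN x y
  refine ⟨fun j k _ _ x y => ?_, fun d c x y => ?_⟩
  · rw [pow_add, Module.End.mul_apply]
    exact mixedNijenhuisTorsion.pow_pow_eq_zero hT j k x y
  · rw [sub_right_comm]
    exact mixedNijenhuisTorsion.sum_smul_pow_eq_zero hT _ c x y

/-- If `N` is a Nijenhuis operator on a left-symmetric algebra
`(L, m)`, then for all `j, k ≥ 1`:
`Nʲ(x)·Nᵏ(y) − Nᵏ(Nʲ(x)·y) − Nʲ(x·Nᵏ(y)) + N^{j+k}(x·y) = 0`,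
and consequently every polynomial `P(N) = Σᵢ cᵢ Nⁱ` with scalar coefficients is
again a Nijenhuis operator. -/
theorem nijenhuis_powers_and_polynomials {K L : Type*} [Field K] [CharZero K]
    [AddCommGroup L] [Module K L]
    (m : L →ₗ[K] L →ₗ[K] L) (N : L →ₗ[K] L)
    (hls : ∀ x y z : L, m (m x y) z - m x (m y z) = m (m y x) z - m y (m x z))
    (hN : ∀ x y : L,
      m (N x) (N y) - N (m x (N y)) - N (m (N x) y) + N (N (m x y)) = 0) :
    (∀ (j k : ℕ), 1 ≤ j → 1 ≤ k → ∀ x y : L,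
      m ((N ^ j) x) ((N ^ k) y) - (N ^ k) (m ((N ^ j) x) y)
        - (N ^ j) (m x ((N ^ k) y)) + (N ^ (j + k)) (m x y) = 0) ∧
    (∀ (d : ℕ) (c : ℕ → K),
      let P : L →ₗ[K] L := ∑ i ∈ Finset.range (d + 1), c i • N ^ i
      ∀ x y : L,
        m (P x) (P y) - P (m x (P y)) - P (m (P x) y) + P (P (m x y)) = 0) :=
  nijenhuis_powers_and_polynomials_general m N hN
end

section
/- Let (L,·) be a left-symmetric algebra and N: L → L a linear operator with N² = Id. Then N is a Nijenhuis operator if and only if N − Id is a Rota-Baxter operator of weight 2 (equivalently, N + Id is a Rota-Baxter operator of weight −2). -/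
/-! Expanding by bilinearity, the weight term cancels the cross terms in both Rota–Baxter
identities, and each reduces to `N x · N y + x · y = N (N x · y + x · N y)`; once `N² = id`,
this is the Nijenhuis identity with `N² (x · y)` replaced by `x · y`. -/

section

variable {R M : Type*} [CommSemiring R] [AddCommGroup M] [Module R M]
  (m : M →ₗ[R] M →ₗ[R] M) (N : M →ₗ[R] M)

theorem nijenhuis_expr_eq_of_involutive (hN : ∀ x, N (N x) = x) (x y : M) :
    m (N x) (N y) - N (m x (N y)) - N (m (N x) y) + N (N (m x y)) =
      m (N x) (N y) + m x y - N (m (N x) y + m x (N y)) := by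
  rw [hN, map_add]
  abel

theorem rotaBaxter_sub_id_iff (x y : M) :
    m (N x - x) (N y - y)
        = (N (m (N x - x) y + m x (N y - y)) - (m (N x - x) y + m x (N y - y)))
          + (2 : ℤ) • (N (m x y) - m x y) ↔
      m (N x) (N y) + m x y - N (m (N x) y + m x (N y)) = 0 := by
  rw [← sub_eq_zero]
  simp only [map_sub, map_add, LinearMap.sub_apply]
  constructor <;> intro h <;> rw [← h] <;> abel

theorem rotaBaxter_add_id_iff (x y : M) :
    m (N x + x) (N y + y)
        = (N (m (N x + x) y + m x (N y + y)) + (m (N x + x) y + m x (N y + y)))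
          + (-2 : ℤ) • (N (m x y) + m x y) ↔
      m (N x) (N y) + m x y - N (m (N x) y + m x (N y)) = 0 := by
  rw [← sub_eq_zero]
  simp only [map_add, LinearMap.add_apply]
  constructor <;> intro h <;> rw [← h] <;> abel

end

theorem nijenhuis_iff_rotaBaxter_of_sq_id_general {K L : Type*} [Field K]
    [AddCommGroup L] [Module K L]
    (m : L →ₗ[K] L →ₗ[K] L) (N : L →ₗ[K] L)
    (hN2 : ∀ x : L, N (N x) = x) :
    -- N Nijenhuis ↔ N − Id Rota-Baxter of weight 2
    ((∀ x y : L,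
        m (N x) (N y) - N (m x (N y)) - N (m (N x) y) + N (N (m x y)) = 0) ↔
      (∀ x y : L,
        m (N x - x) (N y - y)
          = (N (m (N x - x) y + m x (N y - y)) - (m (N x - x) y + m x (N y - y)))
            + (2 : ℤ) • (N (m x y) - m x y))) ∧
    -- N Nijenhuis ↔ N + Id Rota-Baxter of weight −2
    ((∀ x y : L,
        m (N x) (N y) - N (m x (N y)) - N (m (N x) y) + N (N (m x y)) = 0) ↔
      (∀ x y : L,
        m (N x + x) (N y + y)
          = (N (m (N x + x) y + m x (N y + y)) + (m (N x + x) y + m x (N y + y)))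
            + (-2 : ℤ) • (N (m x y) + m x y))) := by
  simp only [nijenhuis_expr_eq_of_involutive m N hN2, rotaBaxter_sub_id_iff,
    rotaBaxter_add_id_iff, and_self]

/-- Let `(L, m)` be a left-symmetric algebra and `N : L → L` a
linear operator with `N² = Id`. Then `N` is a Nijenhuis operator iff `N − Id`
is a Rota-Baxter operator of weight `2`, and equivalently iff `N + Id` is a
Rota-Baxter operator of weight `−2`. -/
theorem nijenhuis_iff_rotaBaxter_of_sq_id {K L : Type*} [Field K] [CharZero K]
    [AddCommGroup L] [Module K L]
    (m : L →ₗ[K] L →ₗ[K] L) (N : L →ₗ[K] L)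
    (hls : ∀ x y z : L, m (m x y) z - m x (m y z) = m (m y x) z - m y (m x z))
    (hN2 : ∀ x : L, N (N x) = x) :
    -- N Nijenhuis ↔ N − Id Rota-Baxter of weight 2
    ((∀ x y : L,
        m (N x) (N y) - N (m x (N y)) - N (m (N x) y) + N (N (m x y)) = 0) ↔
      (∀ x y : L,
        m (N x - x) (N y - y)
          = (N (m (N x - x) y + m x (N y - y)) - (m (N x - x) y + m x (N y - y)))
            + (2 : ℤ) • (N (m x y) - m x y))) ∧
    -- N Nijenhuis ↔ N + Id Rota-Baxter of weight −2
    ((∀ x y : L,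
        m (N x) (N y) - N (m x (N y)) - N (m (N x) y) + N (N (m x y)) = 0) ↔
      (∀ x y : L,
        m (N x + x) (N y + y)
          = (N (m (N x + x) y + m x (N y + y)) + (m (N x + x) y + m x (N y + y)))
            + (-2 : ℤ) • (N (m x y) + m x y))) :=
  nijenhuis_iff_rotaBaxter_of_sq_id_general m N hN2
end
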